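/- arXiv:2412.01668 — 4 statements merged into one kernel-verified Lean document; each statement's English description precedes it below -/
import Mathlib

section
/- For every integer d ≥ 2, the set of rational preperiodic points of r_d is exactly {1, 2, …, d+6}; that is, a rational number x has finite forward orbit {x, r_d(x), r_d^{∘2}(x), …} under r_d if and only if x is an integer with 1 ≤ x ≤ d+6. -/
/-- The polynomial `c_d` over `ℚ`. -/
def cQ (d : ℕ) (x : ℚ) : ℚ :=
  if d % 2 = 0 then
    (1 / (d.factorial : ℚ)) * ∏ i ∈ Finset.Icc 1 (d / 2), (x ^ 2 - ((2 * (i : ℚ) - 1) / 2) ^ 2)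
  else
    (1 / (d.factorial : ℚ)) * x * ∏ i ∈ Finset.Icc 1 (d / 2), (x ^ 2 - (i : ℚ) ^ 2)

/-- The polynomial `s_d` over `ℚ`. -/
def sQ (d : ℕ) (x : ℚ) : ℚ :=
  ∑ j ∈ Finset.range (d / 2 + 1), (-1 : ℚ) ^ (d / 2 - j) * cQ (2 * j + d % 2) x

/-- The polynomial `r_d` of Doyle–Hyde, over `ℚ`. -/
def rQ (d : ℕ) (x : ℚ) : ℚ :=
  if d % 2 = 0 then sQ d (x - 3 - ((d : ℚ) + 1) / 2) + 2
  else sQ d (x - 3 - ((d : ℚ) + 1) / 2) - x + (d : ℚ) + 6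


namespace DH

/-- period-6 sequence 1,0,-1,-1,0,1 -/
def a6 (m : ℕ) : ℤ :=
  match m % 6 with
  | 0 => 1 | 1 => 0 | 2 => -1 | 3 => -1 | 4 => 0 | _ => 1

/-- period-6 sequence 0,1,1,0,-1,-1 -/
def b6 (m : ℕ) : ℤ :=
  match m % 6 with
  | 0 => 0 | 1 => 1 | 2 => 1 | 3 => 0 | 4 => -1 | _ => -1

lemma a6_abs (m : ℕ) : |a6 m| ≤ 1 := by
  unfold a6
  have h : m % 6 < 6 := Nat.mod_lt _ (by norm_num)
  interval_cases h : m % 6 <;> simp [h]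

lemma b6_abs (m : ℕ) : |b6 m| ≤ 1 := by
  unfold b6
  have h : m % 6 < 6 := Nat.mod_lt _ (by norm_num)
  interval_cases h : m % 6 <;> simp [h]

lemma b6_succ (m : ℕ) : b6 (m + 1) = b6 m + a6 m := by
  unfold a6 b6
  have h : m % 6 < 6 := Nat.mod_lt _ (by norm_num)
  have h2 : (m+1) % 6 = (m % 6 + 1) % 6 := by omega
  rw [h2]
  interval_cases h : m % 6 <;> simp [h]

lemma a6_succ (m : ℕ) : a6 (m + 1) = a6 m - b6 (m + 1) := by
  unfold a6 b6
  have h : m % 6 < 6 := Nat.mod_lt _ (by norm_num)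
  have h2 : (m+1) % 6 = (m % 6 + 1) % 6 := by omega
  rw [h2]
  interval_cases h : m % 6 <;> simp [h]

/-- alternating even binomial sum -/
def AZ (k m : ℕ) : ℤ := ∑ j ∈ Finset.range (k+1), (-1)^(k+j) * ((m+j).choose (2*j) : ℤ)

/-- alternating odd binomial sum -/
def BZ (k m : ℕ) : ℤ := ∑ j ∈ Finset.range (k+1), (-1)^(k+j) * ((m+j).choose (2*j+1) : ℤ)

lemma AZ_zero (m : ℕ) : AZ 0 m = 1 := by simp [AZ]

lemma BZ_zero (m : ℕ) : BZ 0 m = m := by simp [BZ]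

lemma AZ_col0 (k : ℕ) : AZ k 0 = (-1)^k := by
  unfold AZ
  rw [Finset.sum_eq_single 0]
  · simp
  · intro j hj hj0
    rw [Nat.choose_eq_zero_of_lt (by omega)]
    simp
  · simp

lemma BZ_col0 (k : ℕ) : BZ k 0 = 0 := by
  unfold BZ
  apply Finset.sum_eq_zero
  intro j hj
  rw [Nat.choose_eq_zero_of_lt (by omega)]
  simp

lemma BZ_succ (k m : ℕ) : BZ k (m+1) = BZ k m + AZ k m := by
  unfold AZ BZ
  rw [← Finset.sum_add_distrib]
  apply Finset.sum_congr rfl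
  intro j hj
  rw [show m + 1 + j = m + j + 1 by omega, Nat.choose_succ_succ (m+j) (2*j)]
  push_cast
  ring

lemma AZ_succ (k m : ℕ) : AZ (k+1) (m+1) = AZ (k+1) m + BZ k (m+1) := by
  unfold AZ BZ
  have key : ∀ j ∈ Finset.range (k+2), (-1:ℤ)^(k+1+j) * ((m+1+j).choose (2*j) : ℤ)
      = (-1)^(k+1+j) * ((m+j).choose (2*j) : ℤ)
        + (if j = 0 then 0 else (-1)^(k+1+j) * ((m+j).choose (2*j-1) : ℤ)) := by
    intro j hj
    rcases Nat.eq_zero_or_pos j with rfl | hjpos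
    · simp
    · have h1 : m + 1 + j = (m + j) + 1 := by omega
      have h2 : 2*j = (2*j - 1) + 1 := by omega
      rw [if_neg (by omega), h1, h2, Nat.choose_succ_succ (m+j) (2*j-1)]
      push_cast
      ring
  rw [Finset.sum_congr rfl key, Finset.sum_add_distrib]
  congr 1
  rw [Finset.sum_range_succ']
  simp only [Nat.add_one_ne_zero, if_false, if_true, reduceIte, add_zero]
  apply Finset.sum_congr rfl
  intro i hi
  have h1 : 2 * (i+1) - 1 = 2*i + 1 := by omega
  have h2 : m + (i+1) = m + 1 + i := by omega
  have h3 : (-1:ℤ)^(k+1+(i+1)) = (-1)^(k+i) := by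
    rw [show k+1+(i+1) = (k+i)+2 by omega, pow_add]
    norm_num
  rw [h1, h2, h3]


def ee (k : ℕ) : ℤ := (-1)^k

structure Evals (k : ℕ) : Prop where
  e1 : ∀ m ≤ k, AZ k m = ee k * a6 m
  e2 : ∀ m ≤ k+1, BZ k m = ee k * b6 m
  e3 : AZ k (k+1) = ee k * a6 (k+1) + 1
  e4 : BZ k (k+2) = ee k * b6 (k+2) + 1
  e5 : AZ k (k+2) = ee k * a6 (k+2) + (2*k+2)
  e6 : BZ k (k+3) = ee k * b6 (k+3) + (2*k+3)

lemma b6_0 : b6 0 = 0 := rfl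
lemma a6_0 : a6 0 = 1 := rfl

lemma evals (k : ℕ) : Evals k := by
  induction k with
  | zero =>
    have hA : ∀ m, AZ 0 m = 1 := AZ_zero
    have hB : ∀ m, BZ 0 m = (m : ℤ) := BZ_zero
    refine ⟨?_, ?_, ?_, ?_, ?_, ?_⟩
    · intro m hm; interval_cases m; simp [hA, ee, a6]
    · intro m hm; interval_cases m <;> simp [hB, ee, b6] <;> rfl
    · simp [hA, ee]; rfl
    · simp [hB, ee]; rfl
    · simp [hA, ee]; rfl
    · simp [hB, ee]; rfl
  | succ k ih =>
    have hee : ee (k+1) = -(ee k) := by simp [ee, pow_succ]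
    have he1 : ∀ m ≤ k+1, AZ (k+1) m = ee (k+1) * a6 m := by
      intro m hm
      induction m with
      | zero => simp [AZ_col0, ee, a6_0]
      | succ n ihn =>
        rw [AZ_succ, ihn (by omega), ih.e2 (n+1) (by omega), hee, a6_succ]
        ring
    have he2 : ∀ m ≤ k+2, BZ (k+1) m = ee (k+1) * b6 m := by
      intro m hm
      induction m with
      | zero => simp [BZ_col0, b6_0]
      | succ n ihn =>
        rw [BZ_succ, ihn (by omega), he1 n (by omega), b6_succ]
        ring
    have he3 : AZ (k+1) (k+2) = ee (k+1) * a6 (k+2) + 1 := by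
      rw [show k+2 = (k+1)+1 by rfl, AZ_succ, he1 (k+1) le_rfl, ih.e4,
        show a6 ((k+1)+1) = a6 (k+1) - b6 ((k+1)+1) from a6_succ (k+1), hee]
      ring
    have he4 : BZ (k+1) (k+3) = ee (k+1) * b6 (k+3) + 1 := by
      rw [show k+3 = (k+2)+1 by rfl, BZ_succ, he2 (k+2) le_rfl, he3,
        show b6 ((k+2)+1) = b6 (k+2) + a6 (k+2) from b6_succ (k+2)]
      ring
    have he5 : AZ (k+1) (k+3) = ee (k+1) * a6 (k+3) + (2*(k+1)+2) := by
      rw [show k+3 = (k+2)+1 by rfl, AZ_succ, he3, ih.e6,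
        show a6 ((k+2)+1) = a6 (k+2) - b6 ((k+2)+1) from a6_succ (k+2), hee]
      push_cast
      ring
    have he6 : BZ (k+1) (k+4) = ee (k+1) * b6 (k+4) + (2*(k+1)+3) := by
      rw [show k+4 = (k+3)+1 by rfl, BZ_succ, he4, he5,
        show b6 ((k+3)+1) = b6 (k+3) + a6 (k+3) from b6_succ (k+3)]
      push_cast
      ring
    exact ⟨he1, he2, he3, he4, he5, he6⟩

lemma ee_abs (k : ℕ) : |ee k| = 1 := by simp [ee]

lemma ee_mul_abs_le_a (k m : ℕ) : |ee k * a6 m| ≤ 1 := by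
  rw [abs_mul, ee_abs, one_mul]; exact a6_abs m

lemma ee_mul_abs_le_b (k m : ℕ) : |ee k * b6 m| ≤ 1 := by
  rw [abs_mul, ee_abs, one_mul]; exact b6_abs m

lemma growthA1 : ∀ n : ℕ, 4 ≤ n → (n:ℤ) + 5 ≤ AZ 1 n := by
  intro n hn
  induction n with
  | zero => omega
  | succ n ihn =>
    rcases Nat.lt_or_ge n 4 with h | h
    · have hn3 : n = 3 := by omega
      subst hn3
      simp [AZ, Finset.sum_range_succ]
      decide
    · have h0 := ihn (by omega)
      rw [show (1:ℕ) = 0 + 1 by rfl, AZ_succ, BZ_zero]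
      push_cast
      omega

lemma growthB1 : ∀ n : ℕ, 5 ≤ n → 2*(n:ℤ) + 2 ≤ BZ 1 n := by
  intro n hn
  induction n with
  | zero => omega
  | succ n ihn =>
    rcases Nat.lt_or_ge n 5 with h | h
    · have hn4 : n = 4 := by omega
      subst hn4
      simp [BZ, Finset.sum_range_succ]
      decide
    · have h0 := ihn (by omega)
      have hA := growthA1 n (by omega)
      rw [BZ_succ]
      push_cast
      omega

/-- growth of AZ and BZ beyond the window -/
lemma growth (k : ℕ) (hk : 1 ≤ k) :
    (∀ m : ℕ, k+3 ≤ m → (m:ℤ) + k + 4 ≤ AZ k m) ∧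
    (∀ m : ℕ, k+4 ≤ m → 2*(m:ℤ) + 2 ≤ BZ k m) := by
  induction k with
  | zero => omega
  | succ k ih =>
    rcases Nat.eq_zero_or_pos k with rfl | hk1
    · constructor
      · intro m hm
        have := growthA1 m (by omega)
        push_cast
        omega
      · intro m hm
        have := growthB1 m (by omega)
        push_cast
        omega
    · have ihA := (ih hk1).1
      have ihB := (ih hk1).2
      have hA : ∀ m : ℕ, (k+1)+3 ≤ m → (m:ℤ) + (k+1) + 4 ≤ AZ (k+1) m := by
        intro m hm
        induction m with
        | zero => omega
        | succ n ihn =>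
          rcases Nat.lt_or_ge n (k+4) with h | h
          · have hn : n = k+3 := by omega
            subst hn
            have hst : AZ (k+1) (k+3+1) = AZ (k+1) (k+3) + BZ k (k+3+1) := AZ_succ k (k+3)
            have e5 := (evals (k+1)).e5
            rw [show k+1+2 = k+3 by omega] at e5
            have hb := ihB (k+3+1) (by omega)
            have ha := ee_mul_abs_le_a (k+1) (k+3)
            rw [abs_le] at ha
            rw [e5] at hst
            rw [hst]
            push_cast at hb ⊢
            omega
          · have h0 := ihn (by omega)
            have hb := ihB (n+1) (by omega)
            rw [AZ_succ]
            push_cast at hb h0 ⊢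
            omega
      have hB : ∀ m : ℕ, (k+1)+4 ≤ m → 2*(m:ℤ) + 2 ≤ BZ (k+1) m := by
        intro m hm
        induction m with
        | zero => omega
        | succ n ihn =>
          rcases Nat.lt_or_ge n (k+5) with h | h
          · have hn : n = k+4 := by omega
            subst hn
            have hst : BZ (k+1) (k+4+1) = BZ (k+1) (k+4) + AZ (k+1) (k+4) := BZ_succ (k+1) (k+4)
            have e6 := (evals (k+1)).e6
            rw [show k+1+3 = k+4 by omega] at e6
            have ha := hA (k+4) (by omega)
            have hb := ee_mul_abs_le_b (k+1) (k+4)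
            rw [abs_le] at hb
            rw [e6] at hst
            rw [hst]
            push_cast at ha ⊢
            omega
          · have h0 := ihn (by omega)
            have ha := hA n (by omega)
            rw [BZ_succ]
            push_cast at ha h0 ⊢
            omega
      exact ⟨hA, hB⟩


/-! Evaluation of cQ at lattice points -/

open Finset

lemma prod_even_eval (m j : ℕ) :
    (∏ i ∈ Finset.Icc 1 j, (((m:ℚ) + 1/2) ^ 2 - ((2 * (i:ℚ) - 1) / 2) ^ 2))
      = ((m + j).descFactorial (2*j) : ℚ) := by
  induction j with
  | zero => simp
  | succ j ihj =>
    rw [Finset.prod_Icc_succ_top (by omega)]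
    rw [ihj]
    have hfac : (((m:ℚ) + 1/2) ^ 2 - ((2 * ((j+1):ℚ) - 1) / 2) ^ 2)
        = ((m:ℚ) + 1 + j) * ((m:ℚ) - j) := by ring
    push_cast at hfac ⊢
    rw [hfac]
    -- descFactorial identity
    rcases Nat.lt_or_ge m (j+1) with h | h
    · -- both sides zero
      have h1 : (m + j) < 2*j → ((m+j).descFactorial (2*j)) = 0 := fun hh =>
        Nat.descFactorial_eq_zero_iff_lt.mpr hh
      have h2 : (m + (j+1)).descFactorial (2*(j+1)) = 0 :=
        Nat.descFactorial_eq_zero_iff_lt.mpr (by omega)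
      rw [h2]
      rcases Nat.lt_or_ge (m+j) (2*j) with hh | hh
      · rw [h1 hh]
        push_cast
        ring
      · -- m = j exactly; factor (m - j) = 0
        have : (m:ℚ) - j = 0 := by
          have : m = j := by omega
          simp [this]
        push_cast
        rw [this]
        push_cast
        ring
    · -- m ≥ j+1
      have key : (m + (j+1)).descFactorial (2*(j+1))
          = (m + 1 + j) * ((m - j) * ((m+j).descFactorial (2*j))) := by
        have h1 : m + (j+1) = (m + j) + 1 := by omega
        have h2 : 2*(j+1) = (2*j+1) + 1 := by omega
        rw [h1, h2, Nat.succ_descFactorial_succ, Nat.descFactorial_succ]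
        have h3 : m + j - 2*j = m - j := by omega
        rw [h3]
        ring
      rw [key]
      have hmj : ((m - j : ℕ) : ℚ) = (m:ℚ) - j := by
        push_cast [Nat.cast_sub (by omega : j ≤ m)]
        ring
      push_cast [hmj]
      ring

lemma prod_odd_eval (m j : ℕ) :
    ((m:ℚ) * ∏ i ∈ Finset.Icc 1 j, ((m:ℚ) ^ 2 - (i:ℚ) ^ 2))
      = ((m + j).descFactorial (2*j+1) : ℚ) := by
  induction j with
  | zero => simp
  | succ j ihj =>
    rw [Finset.prod_Icc_succ_top (by omega)]
    have hL : (m:ℚ) * ((∏ i ∈ Finset.Icc 1 j, ((m:ℚ) ^ 2 - (i:ℚ) ^ 2)) * ((m:ℚ)^2 - ((j+1:ℕ):ℚ)^2))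
        = ((m:ℚ) * ∏ i ∈ Finset.Icc 1 j, ((m:ℚ) ^ 2 - (i:ℚ) ^ 2)) * ((m:ℚ)^2 - ((j+1:ℕ):ℚ)^2) := by
      ring
    rw [hL, ihj]
    rcases Nat.lt_or_ge m (j+1) with h | h
    · have h1 : (m+j).descFactorial (2*j+1) = 0 :=
        Nat.descFactorial_eq_zero_iff_lt.mpr (by omega)
      have h2 : (m + (j+1)).descFactorial (2*(j+1)+1) = 0 :=
        Nat.descFactorial_eq_zero_iff_lt.mpr (by omega)
      rw [h1, h2]
      push_cast
      ring
    · have key : (m + (j+1)).descFactorial (2*(j+1)+1)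
          = (m + j + 1) * ((m - (j+1)) * ((m+j).descFactorial (2*j+1))) := by
        have h1 : m + (j+1) = (m + j) + 1 := by omega
        have h2 : 2*(j+1)+1 = (2*j+2) + 1 := by omega
        rw [h1, h2, Nat.succ_descFactorial_succ]
        rw [show 2*j+2 = (2*j+1)+1 by omega, Nat.descFactorial_succ]
        have h3 : m + j - (2*j+1) = m - (j+1) := by omega
        rw [h3]
      rw [key]
      have hmj : ((m - (j+1) : ℕ) : ℚ) = (m:ℚ) - (j+1) := by
        push_cast [Nat.cast_sub (by omega : j+1 ≤ m)]
        ring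
      push_cast [hmj]
      ring


lemma factorial_cast_ne (n : ℕ) : ((n.factorial : ℚ)) ≠ 0 := by
  exact_mod_cast Nat.factorial_ne_zero n

lemma cQ_even_eval (j m : ℕ) : cQ (2*j) ((m:ℚ) + 1/2) = (((m+j).choose (2*j) : ℕ) : ℚ) := by
  unfold cQ
  rw [if_pos (by omega), Nat.mul_div_cancel_left j (by norm_num)]
  rw [prod_even_eval m j, Nat.descFactorial_eq_factorial_mul_choose]
  push_cast
  field_simp

lemma cQ_odd_eval (j m : ℕ) : cQ (2*j+1) ((m:ℚ)) = (((m+j).choose (2*j+1) : ℕ) : ℚ) := by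
  unfold cQ
  rw [if_neg (by omega), show (2*j+1)/2 = j by omega]
  rw [mul_assoc, prod_odd_eval m j, Nat.descFactorial_eq_factorial_mul_choose]
  push_cast
  field_simp

lemma cQ_even_neg (j : ℕ) (x : ℚ) : cQ (2*j) (-x) = cQ (2*j) x := by
  unfold cQ
  rw [if_pos (by omega), if_pos (by omega), neg_sq]

lemma cQ_odd_neg (j : ℕ) (x : ℚ) : cQ (2*j+1) (-x) = -cQ (2*j+1) x := by
  unfold cQ
  rw [if_neg (by omega), if_neg (by omega), neg_sq]
  ring

lemma neg_one_pow_sub_q (k j : ℕ) (h : j ≤ k) : ((-1:ℚ))^(k-j) = (-1)^(k+j) := by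
  have : k + j = (k - j) + 2*j := by omega
  rw [this, pow_add]
  have : ((-1:ℚ))^(2*j) = 1 := by
    rw [pow_mul]
    norm_num
  rw [this, mul_one]

lemma sQ_even_eval (k m : ℕ) : sQ (2*k) ((m:ℚ) + 1/2) = ((AZ k m : ℤ) : ℚ) := by
  unfold sQ AZ
  rw [show 2*k % 2 = 0 by omega, show 2*k/2 = k by omega]
  push_cast
  apply Finset.sum_congr rfl
  intro j hj
  rw [Finset.mem_range] at hj
  rw [add_zero, cQ_even_eval j m, neg_one_pow_sub_q k j (by omega)]

lemma sQ_odd_eval (k m : ℕ) : sQ (2*k+1) ((m:ℚ)) = ((BZ k m : ℤ) : ℚ) := by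
  unfold sQ BZ
  rw [show (2*k+1) % 2 = 1 by omega, show (2*k+1)/2 = k by omega]
  push_cast
  apply Finset.sum_congr rfl
  intro j hj
  rw [Finset.mem_range] at hj
  rw [cQ_odd_eval j m, neg_one_pow_sub_q k j (by omega)]

lemma sQ_even_neg (k : ℕ) (x : ℚ) : sQ (2*k) (-x) = sQ (2*k) x := by
  unfold sQ
  rw [show 2*k % 2 = 0 by omega]
  simp only [add_zero]
  apply Finset.sum_congr rfl
  intro j hj
  rw [cQ_even_neg]

lemma sQ_odd_neg (k : ℕ) (x : ℚ) : sQ (2*k+1) (-x) = -sQ (2*k+1) x := by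
  unfold sQ
  rw [← Finset.sum_neg_distrib]
  apply Finset.sum_congr rfl
  intro j hj
  rw [show (2*k+1) % 2 = 1 by omega, cQ_odd_neg]
  ring

lemma rQ_even_hi (k m : ℕ) : rQ (2*k) ((m:ℚ) + k + 4) = ((AZ k m : ℤ) : ℚ) + 2 := by
  unfold rQ
  rw [if_pos (by omega)]
  have h : ((m:ℚ) + k + 4) - 3 - (((2*k : ℕ):ℚ) + 1)/2 = (m:ℚ) + 1/2 := by
    push_cast
    ring
  rw [h, sQ_even_eval]

lemma rQ_even_lo (k m : ℕ) : rQ (2*k) ((k:ℚ) + 3 - m) = ((AZ k m : ℤ) : ℚ) + 2 := by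
  unfold rQ
  rw [if_pos (by omega)]
  have h : ((k:ℚ) + 3 - m) - 3 - (((2*k : ℕ):ℚ) + 1)/2 = -((m:ℚ) + 1/2) := by
    push_cast
    ring
  rw [h, sQ_even_neg, sQ_even_eval]

lemma rQ_odd_hi (k m : ℕ) : rQ (2*k+1) ((m:ℚ) + k + 4) = ((BZ k m : ℤ) : ℚ) - m + k + 3 := by
  unfold rQ
  rw [if_neg (by omega)]
  have h : ((m:ℚ) + k + 4) - 3 - ((((2*k+1) : ℕ):ℚ) + 1)/2 = (m:ℚ) := by
    push_cast
    ring
  rw [h, sQ_odd_eval]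
  push_cast
  ring

lemma rQ_odd_lo (k m : ℕ) : rQ (2*k+1) ((k:ℚ) + 4 - m) = -((BZ k m : ℤ) : ℚ) + m + k + 3 := by
  unfold rQ
  rw [if_neg (by omega)]
  have h : ((k:ℚ) + 4 - m) - 3 - ((((2*k+1) : ℕ):ℚ) + 1)/2 = -(m:ℚ) := by
    push_cast
    ring
  rw [h, sQ_odd_neg, sQ_odd_eval]
  push_cast
  ring


/-! Integer dynamics -/

lemma int_rep_hi (c : ℤ) (x : ℤ) (h : c ≤ x) : ∃ m : ℕ, (m:ℤ) = x - c := 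
  ⟨(x - c).toNat, Int.toNat_of_nonneg (by omega)⟩

lemma cast_eq_of_int (m : ℕ) (x c : ℤ) (h : (m:ℤ) = x - c) : (x:ℚ) = (m:ℚ) + c := by
  have : x = (m:ℤ) + c := by omega
  rw [this]
  push_cast
  ring

lemma inrange_even (k : ℕ) (hk : 1 ≤ k) (x : ℤ) (h1 : 1 ≤ x) (h2 : x ≤ 2*k+6) :
    ∃ y : ℤ, rQ (2*k) (x:ℚ) = (y:ℚ) ∧ 1 ≤ y ∧ y ≤ 2*k+6 := by
  have ev := evals k
  rcases le_or_gt ((k:ℤ)+4) x with hx | hx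
  · obtain ⟨m, hm⟩ := int_rep_hi ((k:ℤ)+4) x hx
    have hxq : (x:ℚ) = (m:ℚ) + ((k:ℤ):ℚ) + 4 := by
      rw [cast_eq_of_int m x ((k:ℤ)+4) hm]; push_cast; ring
    have hmk : m ≤ k + 2 := by omega
    refine ⟨AZ k m + 2, ?_, ?_, ?_⟩
    · rw [hxq]
      push_cast
      rw [rQ_even_hi k m]
      try push_cast
      try ring
    all_goals {
      rcases Nat.lt_or_ge m (k+1) with hc | hc
      · have := ev.e1 m (by omega)
        have hab := ee_mul_abs_le_a k m
        rw [abs_le] at hab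
        omega
      · rcases Nat.lt_or_ge m (k+2) with hc2 | hc2
        · have hmeq : m = k+1 := by omega
          subst hmeq
          have := ev.e3
          have hab := ee_mul_abs_le_a k (k+1)
          rw [abs_le] at hab
          omega
        · have hmeq : m = k+2 := by omega
          subst hmeq
          have := ev.e5
          have hab := ee_mul_abs_le_a k (k+2)
          rw [abs_le] at hab
          push_cast at this
          omega }
  · obtain ⟨m, hm⟩ := int_rep_hi 0 (-(x) + (k:ℤ) + 3) (by omega)
    have hm' : (m:ℤ) = (k:ℤ) + 3 - x := by omega
    have hxq : (x:ℚ) = (k:ℚ) + 3 - (m:ℚ) := by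
      have : x = (k:ℤ) + 3 - m := by omega
      rw [this]; push_cast; ring
    have hmk : m ≤ k + 2 := by omega
    refine ⟨AZ k m + 2, ?_, ?_, ?_⟩
    · rw [hxq]
      rw [rQ_even_lo k m]
      try push_cast
      try ring
    all_goals {
      rcases Nat.lt_or_ge m (k+1) with hc | hc
      · have := ev.e1 m (by omega)
        have hab := ee_mul_abs_le_a k m
        rw [abs_le] at hab
        omega
      · rcases Nat.lt_or_ge m (k+2) with hc2 | hc2
        · have hmeq : m = k+1 := by omega
          subst hmeq
          have := ev.e3
          have hab := ee_mul_abs_le_a k (k+1)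
          rw [abs_le] at hab
          omega
        · have hmeq : m = k+2 := by omega
          subst hmeq
          have := ev.e5
          have hab := ee_mul_abs_le_a k (k+2)
          rw [abs_le] at hab
          push_cast at this
          omega }

lemma inrange_odd (k : ℕ) (hk : 1 ≤ k) (x : ℤ) (h1 : 1 ≤ x) (h2 : x ≤ 2*k+7) :
    ∃ y : ℤ, rQ (2*k+1) (x:ℚ) = (y:ℚ) ∧ 1 ≤ y ∧ y ≤ 2*k+7 := by
  have ev := evals k
  rcases le_or_gt ((k:ℤ)+4) x with hx | hx
  · obtain ⟨m, hm⟩ := int_rep_hi ((k:ℤ)+4) x hx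
    have hxq : (x:ℚ) = (m:ℚ) + (k:ℚ) + 4 := by
      have : x = (m:ℤ) + k + 4 := by omega
      rw [this]; push_cast; ring
    have hmk : m ≤ k + 3 := by omega
    refine ⟨BZ k m - m + k + 3, ?_, ?_, ?_⟩
    · rw [hxq, rQ_odd_hi k m]
      push_cast
      ring
    all_goals {
      rcases Nat.lt_or_ge m (k+2) with hc | hc
      · have := ev.e2 m (by omega)
        have hab := ee_mul_abs_le_b k m
        rw [abs_le] at hab
        omega
      · rcases Nat.lt_or_ge m (k+3) with hc2 | hc2
        · have hmeq : m = k+2 := by omega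
          subst hmeq
          have := ev.e4
          have hab := ee_mul_abs_le_b k (k+2)
          rw [abs_le] at hab
          omega
        · have hmeq : m = k+3 := by omega
          subst hmeq
          have := ev.e6
          have hab := ee_mul_abs_le_b k (k+3)
          rw [abs_le] at hab
          push_cast at this
          omega }
  · obtain ⟨m, hm⟩ := int_rep_hi 0 (-(x) + (k:ℤ) + 4) (by omega)
    have hm' : (m:ℤ) = (k:ℤ) + 4 - x := by omega
    have hxq : (x:ℚ) = (k:ℚ) + 4 - (m:ℚ) := by
      have : x = (k:ℤ) + 4 - m := by omega
      rw [this]; push_cast; ring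
    have hmk : m ≤ k + 3 := by omega
    refine ⟨-(BZ k m) + m + k + 3, ?_, ?_, ?_⟩
    · rw [hxq, rQ_odd_lo k m]
      push_cast
      ring
    all_goals {
      rcases Nat.lt_or_ge m (k+2) with hc | hc
      · have := ev.e2 m (by omega)
        have hab := ee_mul_abs_le_b k m
        rw [abs_le] at hab
        omega
      · rcases Nat.lt_or_ge m (k+3) with hc2 | hc2
        · have hmeq : m = k+2 := by omega
          subst hmeq
          have := ev.e4
          have hab := ee_mul_abs_le_b k (k+2)
          rw [abs_le] at hab
          omega
        · have hmeq : m = k+3 := by omega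
          subst hmeq
          have := ev.e6
          have hab := ee_mul_abs_le_b k (k+3)
          rw [abs_le] at hab
          push_cast at this
          omega }

lemma escape_even (k : ℕ) (hk : 1 ≤ k) (x : ℤ) (h : x ≤ 0 ∨ 2*k+7 ≤ x) :
    ∃ y : ℤ, rQ (2*k) (x:ℚ) = (y:ℚ) ∧ x + 1 ≤ y ∧ 2*k+7 ≤ y := by
  have gr := (growth k hk).1
  rcases h with h | h
  · obtain ⟨m, hm⟩ := int_rep_hi 0 (-(x) + (k:ℤ) + 3) (by omega)
    have hm' : (m:ℤ) = (k:ℤ) + 3 - x := by omega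
    have hxq : (x:ℚ) = (k:ℚ) + 3 - (m:ℚ) := by
      have : x = (k:ℤ) + 3 - m := by omega
      rw [this]; push_cast; ring
    have hmge : k + 3 ≤ m := by omega
    have hgr := gr m hmge
    refine ⟨AZ k m + 2, ?_, by omega, by omega⟩
    rw [hxq, rQ_even_lo k m]
    push_cast
    ring
  · obtain ⟨m, hm⟩ := int_rep_hi ((k:ℤ)+4) x (by omega)
    have hxq : (x:ℚ) = (m:ℚ) + (k:ℚ) + 4 := by
      have : x = (m:ℤ) + k + 4 := by omega
      rw [this]; push_cast; ring
    have hmge : k + 3 ≤ m := by omega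
    have hgr := gr m hmge
    refine ⟨AZ k m + 2, ?_, by omega, by omega⟩
    rw [hxq, rQ_even_hi k m]
    push_cast
    ring

lemma escape_odd_hi (k : ℕ) (hk : 1 ≤ k) (x : ℤ) (h : 2*k+8 ≤ x) :
    ∃ y : ℤ, rQ (2*k+1) (x:ℚ) = (y:ℚ) ∧ x + 1 ≤ y ∧ 2*k+8 ≤ y := by
  have gr := (growth k hk).2
  obtain ⟨m, hm⟩ := int_rep_hi ((k:ℤ)+4) x (by omega)
  have hxq : (x:ℚ) = (m:ℚ) + (k:ℚ) + 4 := by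
    have : x = (m:ℤ) + k + 4 := by omega
    rw [this]; push_cast; ring
  have hmge : k + 4 ≤ m := by omega
  have hgr := gr m hmge
  refine ⟨BZ k m - m + k + 3, ?_, by omega, by omega⟩
  rw [hxq, rQ_odd_hi k m]
  push_cast
  ring

lemma escape_odd_lo (k : ℕ) (hk : 1 ≤ k) (x : ℤ) (h : x ≤ 0) :
    ∃ y : ℤ, rQ (2*k+1) (x:ℚ) = (y:ℚ) ∧ y ≤ x - 3 := by
  have gr := (growth k hk).2
  obtain ⟨m, hm⟩ := int_rep_hi 0 (-(x) + (k:ℤ) + 4) (by omega)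
  have hm' : (m:ℤ) = (k:ℤ) + 4 - x := by omega
  have hxq : (x:ℚ) = (k:ℚ) + 4 - (m:ℚ) := by
    have : x = (k:ℤ) + 4 - m := by omega
    rw [this]; push_cast; ring
  have hmge : k + 4 ≤ m := by omega
  have hgr := gr m hmge
  refine ⟨-(BZ k m) + m + k + 3, ?_, by omega⟩
  rw [hxq, rQ_odd_lo k m]
  push_cast
  ring


/-! p-adic norm estimates -/

section Padic

variable {p : ℕ} [hp : Fact p.Prime]

lemma pN_pos {q : ℚ} (h : q ≠ 0) : 0 < padicNorm p q :=
  lt_of_le_of_ne (padicNorm.nonneg q) (Ne.symm (padicNorm.nonzero h))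

lemma pN_prod {ι : Type*} (s : Finset ι) (f : ι → ℚ) :
    padicNorm p (∏ i ∈ s, f i) = ∏ i ∈ s, padicNorm p (f i) := by
  classical
  induction s using Finset.induction with
  | empty => simp [padicNorm.one]
  | insert a s hx ih =>
    rw [Finset.prod_insert hx, Finset.prod_insert hx, padicNorm.mul, ih]

lemma pN_nat_le_one (n : ℕ) : padicNorm p (n : ℚ) ≤ 1 := padicNorm.of_nat n

lemma pN_int_le_one (z : ℤ) : padicNorm p (z : ℚ) ≤ 1 := padicNorm.of_int z

lemma pN_dvd_le {a b : ℕ} (h : a ∣ b) (hb : b ≠ 0) :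
    padicNorm p (b : ℚ) ≤ padicNorm p (a : ℚ) := by
  obtain ⟨c, rfl⟩ := h
  push_cast
  rw [padicNorm.mul]
  have ha : (a : ℚ) ≠ 0 := by
    have : a ≠ 0 := by rintro rfl; simp at hb
    exact_mod_cast this
  calc padicNorm p a * padicNorm p c ≤ padicNorm p a * 1 := by
        exact mul_le_mul_of_nonneg_left (pN_nat_le_one c) (padicNorm.nonneg _)
    _ = padicNorm p a := mul_one _

lemma pN_fact_inv_ge_one (n : ℕ) : 1 ≤ (padicNorm p ((n.factorial : ℕ) : ℚ))⁻¹ := by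
  have h1 : padicNorm p ((n.factorial : ℕ) : ℚ) ≤ 1 := pN_nat_le_one _
  have h2 : 0 < padicNorm p ((n.factorial : ℕ) : ℚ) :=
    pN_pos (by exact_mod_cast Nat.factorial_ne_zero n)
  exact (one_le_inv₀ h2).mpr h1

/-- dominant-term sum -/
lemma pN_sum_top (k : ℕ) (F : ℕ → ℚ)
    (h : ∀ j, j < k → padicNorm p (F j) < padicNorm p (F k)) :
    padicNorm p (∑ j ∈ Finset.range (k+1), F j) = padicNorm p (F k) := by
  rcases Nat.eq_zero_or_pos k with rfl | hk
  · simp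
  rw [Finset.sum_range_succ]
  have hpos : 0 < padicNorm p (F k) :=
    lt_of_le_of_lt (padicNorm.nonneg (F 0)) (h 0 hk)
  have hrest : padicNorm p (∑ j ∈ Finset.range k, F j) < padicNorm p (F k) :=
    padicNorm.sum_lt' (fun j hj => h j (Finset.mem_range.mp hj)) hpos
  rw [add_comm]
  rw [padicNorm.add_eq_max_of_ne (by exact ne_of_gt hrest)]
  exact max_eq_left (le_of_lt hrest)

lemma pN_unit_coeff (e : ℕ) (q : ℚ) : padicNorm p ((-1)^e * q) = padicNorm p q := by
  rcases neg_one_pow_eq_or ℚ e with h | h <;> rw [h] <;> simp [padicNorm.neg]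

lemma pN_cQ_even (j : ℕ) (y w : ℚ)
    (hfac : ∀ i : ℕ, 1 ≤ i → padicNorm p (y^2 - ((2*(i:ℚ)-1)/2)^2) = w) :
    padicNorm p (cQ (2*j) y) = w^j * (padicNorm p (((2*j).factorial : ℕ) : ℚ))⁻¹ := by
  unfold cQ
  rw [if_pos (by omega), show 2*j/2 = j by omega]
  rw [padicNorm.mul, padicNorm.div, padicNorm.one, pN_prod]
  rw [Finset.prod_congr rfl (fun i hi => hfac i (Finset.mem_Icc.mp hi).1)]
  rw [Finset.prod_const, Nat.card_Icc]
  simp only [Nat.add_sub_cancel]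
  ring

lemma pN_cQ_odd (j : ℕ) (y w : ℚ)
    (hfac : ∀ i : ℕ, 1 ≤ i → padicNorm p (y^2 - (i:ℚ)^2) = w) :
    padicNorm p (cQ (2*j+1) y)
      = padicNorm p y * w^j * (padicNorm p (((2*j+1).factorial : ℕ) : ℚ))⁻¹ := by
  unfold cQ
  rw [if_neg (by omega), show (2*j+1)/2 = j by omega]
  rw [padicNorm.mul, padicNorm.mul, padicNorm.div, padicNorm.one, pN_prod]
  rw [Finset.prod_congr rfl (fun i hi => hfac i (Finset.mem_Icc.mp hi).1)]
  rw [Finset.prod_const, Nat.card_Icc]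
  simp only [Nat.add_sub_cancel]
  ring

lemma pN_fact_inv_mono {a b : ℕ} (h : a ≤ b) :
    (padicNorm p ((a.factorial : ℕ) : ℚ))⁻¹ ≤ (padicNorm p ((b.factorial : ℕ) : ℚ))⁻¹ := by
  have h1 : padicNorm p ((b.factorial : ℕ) : ℚ) ≤ padicNorm p ((a.factorial : ℕ) : ℚ) :=
    pN_dvd_le (Nat.factorial_dvd_factorial h) (Nat.factorial_ne_zero b)
  have h2 : 0 < padicNorm p ((b.factorial : ℕ) : ℚ) :=
    pN_pos (by exact_mod_cast Nat.factorial_ne_zero b)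
  exact one_div_le_one_div_of_le h2 h1 |>.trans_eq (one_div _) |>.trans_eq' (one_div _)

lemma pN_sQ_even (k : ℕ) (hk : 1 ≤ k) (y w : ℚ) (hw : 1 < w)
    (hfac : ∀ i : ℕ, 1 ≤ i → padicNorm p (y^2 - ((2*(i:ℚ)-1)/2)^2) = w) :
    w ≤ padicNorm p (sQ (2*k) y) := by
  unfold sQ
  rw [show 2*k % 2 = 0 by omega, show 2*k/2 = k by omega]
  simp only [add_zero]
  have hterm : ∀ j : ℕ, padicNorm p ((-1:ℚ)^(k-j) * cQ (2*j) y)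
      = w^j * (padicNorm p (((2*j).factorial : ℕ) : ℚ))⁻¹ := fun j => by
    rw [pN_unit_coeff, pN_cQ_even j y w hfac]
  have hmono : ∀ j, j < k → padicNorm p ((-1:ℚ)^(k-j) * cQ (2*j) y)
      < padicNorm p ((-1:ℚ)^(k-k) * cQ (2*k) y) := by
    intro j hj
    rw [hterm j, hterm k]
    have h1 : (padicNorm p (((2*j).factorial : ℕ) : ℚ))⁻¹
        ≤ (padicNorm p (((2*k).factorial : ℕ) : ℚ))⁻¹ := pN_fact_inv_mono (by omega)
    have h2 : (0:ℚ) < (padicNorm p (((2*j).factorial : ℕ) : ℚ))⁻¹ := by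
      have := pN_fact_inv_ge_one (p := p) (2*j)
      linarith
    have h3 : w^j < w^k := pow_lt_pow_right₀ hw hj
    have hwpos : (0:ℚ) < w^j := by positivity
    nlinarith [pN_fact_inv_ge_one (p := p) (2*k)]
  rw [pN_sum_top k _ hmono, hterm k]
  have h1 := pN_fact_inv_ge_one (p := p) (2*k)
  have h2 : w ≤ w^k := le_self_pow₀ (le_of_lt hw) (by omega)
  nlinarith

lemma pN_sQ_odd (k : ℕ) (hk : 1 ≤ k) (y w : ℚ) (hw : 1 < w)
    (hfac : ∀ i : ℕ, 1 ≤ i → padicNorm p (y^2 - (i:ℚ)^2) = w) :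
    padicNorm p y * w ≤ padicNorm p (sQ (2*k+1) y) := by
  unfold sQ
  rw [show (2*k+1) % 2 = 1 by omega, show (2*k+1)/2 = k by omega]
  have hterm : ∀ j : ℕ, padicNorm p ((-1:ℚ)^(k-j) * cQ (2*j+1) y)
      = padicNorm p y * w^j * (padicNorm p (((2*j+1).factorial : ℕ) : ℚ))⁻¹ := fun j => by
    rw [pN_unit_coeff, pN_cQ_odd j y w hfac]
  rcases eq_or_ne (padicNorm p y) 0 with hy0 | hy0
  · rw [hy0, zero_mul]
    exact padicNorm.nonneg _
  have hypos : 0 < padicNorm p y := lt_of_le_of_ne (padicNorm.nonneg y) (Ne.symm hy0)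
  have hmono : ∀ j, j < k → padicNorm p ((-1:ℚ)^(k-j) * cQ (2*j+1) y)
      < padicNorm p ((-1:ℚ)^(k-k) * cQ (2*k+1) y) := by
    intro j hj
    rw [hterm j, hterm k]
    have h1 : (padicNorm p (((2*j+1).factorial : ℕ) : ℚ))⁻¹
        ≤ (padicNorm p (((2*k+1).factorial : ℕ) : ℚ))⁻¹ := pN_fact_inv_mono (by omega)
    have h2 : (0:ℚ) < (padicNorm p (((2*j+1).factorial : ℕ) : ℚ))⁻¹ := by
      have := pN_fact_inv_ge_one (p := p) (2*j+1)
      linarith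
    have h3 : w^j < w^k := pow_lt_pow_right₀ hw hj
    have hak : (0:ℚ) < (padicNorm p (((2*k+1).factorial : ℕ) : ℚ))⁻¹ := lt_of_lt_of_le h2 h1
    calc padicNorm p y * w^j * (padicNorm p (((2*j+1).factorial : ℕ) : ℚ))⁻¹
        ≤ padicNorm p y * w^j * (padicNorm p (((2*k+1).factorial : ℕ) : ℚ))⁻¹ := by
          apply mul_le_mul_of_nonneg_left h1
          positivity
      _ < padicNorm p y * w^k * (padicNorm p (((2*k+1).factorial : ℕ) : ℚ))⁻¹ := by
          apply mul_lt_mul_of_pos_right _ hak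
          exact mul_lt_mul_of_pos_left h3 hypos
  rw [pN_sum_top k _ hmono, hterm k]
  have h1 := pN_fact_inv_ge_one (p := p) (2*k+1)
  have h2 : w ≤ w^k := le_self_pow₀ (le_of_lt hw) (by omega)
  calc padicNorm p y * w ≤ padicNorm p y * w^k := mul_le_mul_of_nonneg_left h2 (le_of_lt hypos)
    _ ≤ padicNorm p y * w^k * (padicNorm p (((2*k+1).factorial : ℕ) : ℚ))⁻¹ :=
        le_mul_of_one_le_right (by positivity) h1

lemma odd_diff {a b : ℚ} (ha : padicNorm 2 a = 1) (hb : padicNorm 2 b = 1) :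
    padicNorm 2 (a - b) ≤ 2⁻¹ := by
  haveI : Fact (Nat.Prime 2) := ⟨Nat.prime_two⟩
  have key : ∀ q : ℚ, padicNorm 2 q = 1 → ¬((2:ℤ) ∣ q.num) ∧ ¬(2 ∣ q.den) := by
    intro q hq
    have hq0 : q ≠ 0 := by
      intro h; rw [h, padicNorm.zero] at hq; norm_num at hq
    have hden0 : q.den ≠ 0 := q.den_nz
    have hrat : (q:ℚ) = (q.num : ℚ) / (q.den : ℚ) := (Rat.num_div_den q).symm
    have hN : padicNorm 2 ((q.num:ℚ)) / padicNorm 2 ((q.den:ℚ)) = 1 := by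
      rw [← padicNorm.div, ← hrat, hq]
    by_cases hd : 2 ∣ q.den
    · exfalso
      have hnd : ¬ ((2:ℤ) ∣ q.num) := by
        intro hcon
        have hcop := q.reduced
        have h2 : 2 ∣ q.num.natAbs := by
          have := Int.natAbs_dvd_natAbs.mpr hcon
          simpa using this
        have hg : 2 ∣ Nat.gcd q.num.natAbs q.den := Nat.dvd_gcd h2 hd
        rw [hcop] at hg
        omega
      have h1 : padicNorm 2 ((q.num:ℚ)) = 1 := (padicNorm.int_eq_one_iff _).mpr hnd
      have h2' : padicNorm 2 ((q.den:ℚ)) < 1 := (padicNorm.nat_lt_one_iff _).mpr hd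
      have h2p : 0 < padicNorm 2 ((q.den:ℚ)) := pN_pos (by exact_mod_cast hden0)
      rw [h1] at hN
      field_simp at hN
      have hv0 : padicValNat 2 q.den = 0 := by
        by_contra hv
        have : (1:ℚ) < 2 ^ (padicValNat 2 q.den) := by
          have := pow_lt_pow_right₀ (by norm_num : (1:ℚ) < 2) (Nat.pos_of_ne_zero hv)
          simpa using this
        rw [hN] at this
        norm_num at this
        linarith
      have := (padicValNat.eq_zero_iff (p := 2) (n := q.den)).mp hv0
      rcases this with h | h | h
      · norm_num at h
      · exact hden0 h
      · exact h hd
    · constructor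
      · have h2 : padicNorm 2 ((q.den:ℚ)) = 1 := (padicNorm.nat_eq_one_iff _).mpr hd
        rw [h2, div_one] at hN
        exact (padicNorm.int_eq_one_iff _).mp hN
      · exact hd
  obtain ⟨han, had⟩ := key a ha
  obtain ⟨hbn, hbd⟩ := key b hb
  have hda : ((a.den:ℚ)) ≠ 0 := by exact_mod_cast a.den_nz
  have hdb : ((b.den:ℚ)) ≠ 0 := by exact_mod_cast b.den_nz
  have ea : (a.num:ℚ) = a * a.den := (div_eq_iff hda).mp (Rat.num_div_den a)
  have eb : (b.num:ℚ) = b * b.den := (div_eq_iff hdb).mp (Rat.num_div_den b)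
  have hid : ((a.num * b.den - b.num * a.den : ℤ) : ℚ) = (a - b) * ((a.den:ℚ) * (b.den:ℚ)) := by
    push_cast
    rw [ea, eb]
    ring
  have hdvd : ((2:ℤ)^1) ∣ (a.num * b.den - b.num * a.den) := by
    have h1 : a.num % 2 = 1 ∨ a.num % 2 = -1 := by omega
    have h1' : a.num % 2 = 1 := by omega
    have h2 : b.num % 2 = 1 := by omega
    have h3 : ((a.den:ℤ)) % 2 = 1 := by
      have : ¬ ((2:ℤ) ∣ (a.den:ℤ)) := by exact_mod_cast had
      omega
    have h4 : ((b.den:ℤ)) % 2 = 1 := by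
      have : ¬ ((2:ℤ) ∣ (b.den:ℤ)) := by exact_mod_cast hbd
      omega
    have e1 : (a.num * (b.den:ℤ)) % 2 = 1 := by
      rw [Int.mul_emod, h1', h4]
      norm_num
    have e2 : (b.num * (a.den:ℤ)) % 2 = 1 := by
      rw [Int.mul_emod, h2, h3]
      norm_num
    omega

  have hNint : padicNorm 2 ((a.num * b.den - b.num * a.den : ℤ) : ℚ) ≤ ((2:ℕ):ℚ)^(-(1:ℕ):ℤ) := by
    exact (padicNorm.dvd_iff_norm_le (p := 2)).mp (by exact_mod_cast hdvd)
  rw [hid, padicNorm.mul, padicNorm.mul,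
    (padicNorm.nat_eq_one_iff _).mpr had, (padicNorm.nat_eq_one_iff _).mpr hbd] at hNint
  simpa using hNint

lemma pN_two_val : padicNorm 2 (2:ℚ) = 2⁻¹ := by
  haveI : Fact (Nat.Prime 2) := ⟨Nat.prime_two⟩
  have := padicNorm.padicNorm_p_of_prime (p := 2)
  exact_mod_cast this

lemma pN_two_cases {x : ℚ} (hx : 1 < padicNorm 2 x) (h4 : padicNorm 2 x < 4) :
    padicNorm 2 x = 2 := by
  haveI : Fact (Nat.Prime 2) := ⟨Nat.prime_two⟩
  have hxne : x ≠ 0 := by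
    rintro rfl
    rw [padicNorm.zero] at hx
    linarith
  obtain ⟨z, hz⟩ := padicNorm.values_discrete (p := 2) hxne
  have hb : ((2:ℕ):ℚ) = 2 := by norm_num
  rw [hb] at hz
  rw [hz] at hx h4 ⊢
  rcases le_or_gt (-z) 0 with hn | hn
  · exfalso
    have h1 : (2:ℚ)^(-z) ≤ (2:ℚ)^(0:ℤ) := zpow_le_zpow_right₀ (by norm_num) hn
    rw [zpow_zero] at h1
    linarith
  · rcases le_or_gt 2 (-z) with hn2 | hn2
    · exfalso
      have h1 : (2:ℚ)^(2:ℤ) ≤ (2:ℚ)^(-z) := zpow_le_zpow_right₀ (by norm_num) hn2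
      have h22 : (2:ℚ)^(2:ℤ) = 4 := by norm_num
      linarith
    · have hz1 : -z = 1 := by omega
      rw [hz1, zpow_one]

lemma pN_p_ne_two {p : ℕ} [hp : Fact p.Prime] (hpne : p ≠ 2) : padicNorm p (2:ℚ) = 1 := by
  have h := (padicNorm.nat_eq_one_iff (p := p) 2).mpr (by
    intro hdvd
    have := (Nat.prime_dvd_prime_iff_eq hp.out Nat.prime_two).mp hdvd
    exact hpne this)
  exact_mod_cast h

lemma pN_sq (q : ℚ) : padicNorm p (q^2) = (padicNorm p q)^2 := by
  rw [sq, sq, padicNorm.mul]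

lemma pN_sub_eq_right {a b : ℚ} (h : padicNorm p a < padicNorm p b) :
    padicNorm p (a - b) = padicNorm p b := by
  rw [sub_eq_add_neg, padicNorm.add_eq_max_of_ne (by rw [padicNorm.neg]; exact ne_of_lt h)]
  rw [padicNorm.neg]
  exact max_eq_right (le_of_lt h)

lemma pN_sub_eq_left {a b : ℚ} (h : padicNorm p b < padicNorm p a) :
    padicNorm p (a - b) = padicNorm p a := by
  rw [sub_eq_add_neg, padicNorm.add_eq_max_of_ne (by rw [padicNorm.neg]; exact ne_of_gt h)]
  rw [padicNorm.neg]
  exact max_eq_left (le_of_lt h)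

lemma pN_add_eq_left {a b : ℚ} (h : padicNorm p b < padicNorm p a) :
    padicNorm p (a + b) = padicNorm p a := by
  rw [padicNorm.add_eq_max_of_ne (ne_of_gt h)]
  exact max_eq_left (le_of_lt h)

lemma padic_rQ_even {p : ℕ} [hp : Fact p.Prime] (k : ℕ) (hk : 1 ≤ k) (x : ℚ)
    (hx : 1 < padicNorm p x) : padicNorm p x < padicNorm p (rQ (2*k) x) := by
  set c : ℚ := 3 + (((2*k:ℕ):ℚ)+1)/2 with hc
  have harg : x - 3 - (((2*k : ℕ):ℚ)+1)/2 = x + (-c) := by rw [hc]; ring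
  have hyr : rQ (2*k) x = sQ (2*k) (x + (-c)) + 2 := by
    unfold rQ
    rw [if_pos (by omega), harg]
  have hc2 : c = ((2*k+7:ℕ):ℚ)/2 := by rw [hc]; push_cast; ring
  have hoddc : padicNorm p ((2*k+7:ℕ):ℚ) ≤ 1 := pN_nat_le_one _
  by_cases hcase : p = 2 ∧ padicNorm p x < 4
  · obtain ⟨hp2, h4⟩ := hcase
    subst hp2
    have hx2 : padicNorm 2 x = 2 := pN_two_cases hx h4
    have hN2x : padicNorm 2 (2*x) = 1 := by
      rw [padicNorm.mul, pN_two_val, hx2]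
      norm_num
    have hodd : padicNorm 2 ((2*k+7:ℕ):ℚ) = 1 :=
      (padicNorm.nat_eq_one_iff _).mpr (by omega)
    have hdiff := odd_diff hN2x hodd
    have hyeq : x + (-c) = (2*x - ((2*k+7:ℕ):ℚ))/2 := by rw [hc]; push_cast; ring
    have hNy : padicNorm 2 (x + (-c)) ≤ 1 := by
      rw [hyeq, padicNorm.div, pN_two_val]
      rw [div_le_one (by norm_num)]
      linarith
    have hfac : ∀ i : ℕ, 1 ≤ i → padicNorm 2 ((x + (-c))^2 - ((2*(i:ℚ)-1)/2)^2) = 4 := by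
      intro i hi
      have hρcast : (2*(i:ℚ)-1)/2 = ((2*i-1:ℕ):ℚ)/2 := by
        push_cast [Nat.cast_sub (by omega : 1 ≤ 2*i)]
        ring
      have hNρ : padicNorm 2 ((2*(i:ℚ)-1)/2) = 2 := by
        rw [hρcast, padicNorm.div, pN_two_val,
          (padicNorm.nat_eq_one_iff _).mpr (by omega : ¬ 2 ∣ 2*i-1)]
        norm_num
      have hNρ2 : padicNorm 2 (((2*(i:ℚ)-1)/2)^2) = 4 := by
        rw [pN_sq, hNρ]
        norm_num
      have hNy2 : padicNorm 2 ((x + (-c))^2) ≤ 1 := by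
        rw [pN_sq]
        nlinarith [padicNorm.nonneg (p := 2) (x + (-c))]
      rw [pN_sub_eq_right (by rw [hNρ2]; linarith), hNρ2]
    have hs := pN_sQ_even k hk (x+(-c)) 4 (by norm_num) hfac
    rw [hyr, pN_add_eq_left (by rw [pN_two_val]; linarith)]
    linarith
  · have hA : p = 2 → 4 ≤ padicNorm p x := by
      intro h2
      by_contra hcon
      exact hcase ⟨h2, by linarith⟩
    have hN2 : padicNorm p (2:ℚ) ≤ 1 := by
      rcases eq_or_ne p 2 with rfl | hpne
      · rw [pN_two_val]; norm_num
      · rw [pN_p_ne_two hpne]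
    have hN2pos : 0 < padicNorm p (2:ℚ) := pN_pos (by norm_num)
    have hNc1 : padicNorm p c < padicNorm p x := by
      rw [hc2, padicNorm.div]
      rcases eq_or_ne p 2 with rfl | hpne
      · have h4 := hA rfl
        rw [pN_two_val]
        rw [div_lt_iff₀ (by norm_num)]
        nlinarith
      · rw [pN_p_ne_two hpne, div_one]
        exact lt_of_le_of_lt hoddc hx
    have hNy : padicNorm p (x + (-c)) = padicNorm p x := by
      rw [pN_add_eq_left (by rw [padicNorm.neg]; exact hNc1)]
    set w : ℚ := padicNorm p x ^ 2 with hw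
    have hw1 : 1 < w := by rw [hw]; nlinarith
    have hfac : ∀ i : ℕ, 1 ≤ i → padicNorm p ((x + (-c))^2 - ((2*(i:ℚ)-1)/2)^2) = w := by
      intro i hi
      have hρcast : (2*(i:ℚ)-1)/2 = ((2*i-1:ℕ):ℚ)/2 := by
        push_cast [Nat.cast_sub (by omega : 1 ≤ 2*i)]
        ring
      have hNρ2 : padicNorm p (((2*(i:ℚ)-1)/2)^2) < w := by
        rw [pN_sq, hρcast, padicNorm.div]
        have hup : padicNorm p ((2*i-1:ℕ):ℚ) ≤ 1 := pN_nat_le_one _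
        have hlow : 0 ≤ padicNorm p ((2*i-1:ℕ):ℚ) := padicNorm.nonneg _
        rcases eq_or_ne p 2 with rfl | hpne
        · have h4 := hA rfl
          rw [pN_two_val, hw]
          have ht : padicNorm 2 ((2*i-1:ℕ):ℚ) / 2⁻¹ ≤ 2 := by
            rw [div_le_iff₀ (by norm_num)]
            linarith
          have ht0 : 0 ≤ padicNorm 2 ((2*i-1:ℕ):ℚ) / 2⁻¹ := by positivity
          have ht2 : (padicNorm 2 ((2*i-1:ℕ):ℚ) / 2⁻¹)^2 ≤ 4 := by nlinarith
          have h16 : (16:ℚ) ≤ padicNorm 2 x ^ 2 := by nlinarith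
          linarith
        · rw [pN_p_ne_two hpne, div_one, hw]
          nlinarith
      have hNy2 : padicNorm p ((x + (-c))^2) = w := by
        rw [pN_sq, hNy, hw]
      rw [pN_sub_eq_left (by rw [hNy2]; exact hNρ2), hNy2]
    have hs := pN_sQ_even k hk (x+(-c)) w hw1 hfac
    rw [hyr, pN_add_eq_left (by linarith)]
    rw [hw] at hs
    nlinarith

lemma padic_rQ_odd {p : ℕ} [hp : Fact p.Prime] (k : ℕ) (hk : 1 ≤ k) (x : ℚ)
    (hx : 1 < padicNorm p x) : padicNorm p x < padicNorm p (rQ (2*k+1) x) := by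
  have harg : x - 3 - ((((2*k+1) : ℕ):ℚ)+1)/2 = x + (-(((k+4:ℕ):ℚ))) := by push_cast; ring
  have hyr : rQ (2*k+1) x = sQ (2*k+1) (x + (-((k+4:ℕ):ℚ))) + (-x + (((2*k+1:ℕ):ℚ) + 6)) := by
    unfold rQ
    rw [if_neg (by omega), harg]
    ring
  have hNc : padicNorm p ((k+4:ℕ):ℚ) ≤ 1 := pN_nat_le_one _
  have hNy : padicNorm p (x + (-((k+4:ℕ):ℚ))) = padicNorm p x := by
    rw [pN_add_eq_left (by rw [padicNorm.neg]; exact lt_of_le_of_lt hNc hx)]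
  set w : ℚ := padicNorm p x ^ 2 with hw
  have hw1 : 1 < w := by rw [hw]; nlinarith
  have hfac : ∀ i : ℕ, 1 ≤ i → padicNorm p ((x + (-((k+4:ℕ):ℚ)))^2 - (i:ℚ)^2) = w := by
    intro i hi
    have hNi : padicNorm p ((i:ℚ)^2) < w := by
      rw [pN_sq, hw]
      have hup : padicNorm p ((i:ℚ)) ≤ 1 := pN_nat_le_one _
      have hlow : 0 ≤ padicNorm p ((i:ℚ)) := padicNorm.nonneg _
      nlinarith
    have hNy2 : padicNorm p ((x + (-((k+4:ℕ):ℚ)))^2) = w := by rw [pN_sq, hNy, hw]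
    rw [pN_sub_eq_left (by rw [hNy2]; exact hNi), hNy2]
  have hs := pN_sQ_odd k hk _ w hw1 hfac
  rw [hNy] at hs
  have hxpos : 0 < padicNorm p x := by linarith
  have hsx : padicNorm p x < padicNorm p (sQ (2*k+1) (x + (-((k+4:ℕ):ℚ)))) := by
    have : padicNorm p x * 1 < padicNorm p x * w := by
      exact mul_lt_mul_of_pos_left hw1 hxpos
    rw [mul_one] at this
    linarith
  have hNlin : padicNorm p (-x + (((2*k+1:ℕ):ℚ) + 6)) = padicNorm p x := by
    have h1 : ((2*k+1:ℕ):ℚ) + 6 = ((2*k+7:ℕ):ℚ) := by push_cast; ring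
    rw [h1, pN_add_eq_left (by rw [padicNorm.neg]; exact lt_of_le_of_lt (pN_nat_le_one _) hx)]
    rw [padicNorm.neg]
  rw [hyr, pN_add_eq_left (by rw [hNlin]; exact hsx), ]
  exact hsx

end Padic


/-! Combined step lemmas -/

lemma padic_rQ_step (d : ℕ) (hd : 2 ≤ d) {p : ℕ} [hp : Fact p.Prime] (y : ℚ)
    (hy : 1 < padicNorm p y) : padicNorm p y < padicNorm p (rQ d y) := by
  rcases Nat.even_or_odd d with he | ho
  · obtain ⟨k, hk⟩ := he
    have h2 : d = 2 * k := by omega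
    rw [h2]
    exact padic_rQ_even k (by omega) y hy
  · obtain ⟨k, hk⟩ := ho
    have h2 : d = 2 * k + 1 := by omega
    rw [h2]
    exact padic_rQ_odd k (by omega) y hy

lemma inrange_step (d : ℕ) (hd : 2 ≤ d) (x : ℤ) (h1 : 1 ≤ x) (h2 : x ≤ (d:ℤ)+6) :
    ∃ y : ℤ, rQ d (x:ℚ) = (y:ℚ) ∧ 1 ≤ y ∧ y ≤ (d:ℤ)+6 := by
  rcases Nat.even_or_odd d with he | ho
  · obtain ⟨k, hk⟩ := he
    have hdk : d = 2 * k := by omega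
    subst hdk
    obtain ⟨y, hy, hy1, hy2⟩ := inrange_even k (by omega) x h1 (by push_cast at h2 ⊢; omega)
    exact ⟨y, hy, hy1, by push_cast; omega⟩
  · obtain ⟨k, hk⟩ := ho
    have hdk : d = 2 * k + 1 := by omega
    subst hdk
    obtain ⟨y, hy, hy1, hy2⟩ := inrange_odd k (by omega) x h1 (by push_cast at h2 ⊢; omega)
    exact ⟨y, hy, hy1, by push_cast; omega⟩

lemma escape_hi_step (d : ℕ) (hd : 2 ≤ d) (x : ℤ) (h : (d:ℤ)+7 ≤ x) :
    ∃ y : ℤ, rQ d (x:ℚ) = (y:ℚ) ∧ x + 1 ≤ y ∧ (d:ℤ)+7 ≤ y := by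
  rcases Nat.even_or_odd d with he | ho
  · obtain ⟨k, hk⟩ := he
    have hdk : d = 2 * k := by omega
    subst hdk
    obtain ⟨y, hy, hy1, hy2⟩ := escape_even k (by omega) x (Or.inr (by push_cast at h ⊢; omega))
    exact ⟨y, hy, hy1, by push_cast at h ⊢; omega⟩
  · obtain ⟨k, hk⟩ := ho
    have hdk : d = 2 * k + 1 := by omega
    subst hdk
    obtain ⟨y, hy, hy1, hy2⟩ := escape_odd_hi k (by omega) x (by push_cast at h ⊢; omega)
    exact ⟨y, hy, hy1, by push_cast at h ⊢; omega⟩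

lemma exists_prime_norm_gt {x : ℚ} (h : ¬ ∃ z : ℤ, x = (z:ℚ)) :
    ∃ p : ℕ, Nat.Prime p ∧ 1 < padicNorm p x := by
  have hden : x.den ≠ 1 := by
    intro hd
    exact h ⟨x.num, by rw [← Rat.num_div_den x, hd]; simp⟩
  set p := x.den.minFac with hpdef
  have hprime : Nat.Prime p := Nat.minFac_prime hden
  haveI : Fact (Nat.Prime p) := ⟨hprime⟩
  have hdvd : p ∣ x.den := Nat.minFac_dvd _
  have hden0 : x.den ≠ 0 := x.den_nz
  have hnum : ¬ ((p:ℤ) ∣ x.num) := by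
    intro hcon
    have h2 : p ∣ x.num.natAbs := by
      have := Int.natAbs_dvd_natAbs.mpr hcon
      simpa using this
    have hg : p ∣ Nat.gcd x.num.natAbs x.den := Nat.dvd_gcd h2 hdvd
    rw [x.reduced] at hg
    have := Nat.le_of_dvd (by norm_num) hg
    have := hprime.two_le
    omega
  refine ⟨p, hprime, ?_⟩
  have hxne : x ≠ 0 := by
    rintro rfl
    simp at hden
  have hx : (x:ℚ) = (x.num : ℚ) / (x.den : ℚ) := (Rat.num_div_den x).symm
  have hNnum : padicNorm p ((x.num:ℚ)) = 1 := (padicNorm.int_eq_one_iff _).mpr hnum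
  have hNden : padicNorm p ((x.den:ℚ)) < 1 := (padicNorm.nat_lt_one_iff _).mpr hdvd
  have hNdenpos : 0 < padicNorm p ((x.den:ℚ)) := pN_pos (by exact_mod_cast hden0)
  rw [hx, padicNorm.div, hNnum]
  rw [lt_div_iff₀ hNdenpos]
  linarith


lemma orbit_infinite_of_strict_int_lo_odd (k : ℕ) (hk : 1 ≤ k) (z : ℤ) (hz : z ≤ 0) :
    (Set.range fun n : ℕ => (rQ (2*k+1))^[n] ((z:ℤ):ℚ)).Infinite := by
  have aux : ∀ n : ℕ, ∃ w : ℤ, (rQ (2*k+1))^[n] ((z:ℤ):ℚ) = (w:ℚ) ∧ w ≤ 0 := by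
    intro n
    induction n with
    | zero => exact ⟨z, rfl, hz⟩
    | succ n ihn =>
      obtain ⟨w, hw, hinv⟩ := ihn
      obtain ⟨y, hy, hy1⟩ := escape_odd_lo k hk w hinv
      exact ⟨y, by rw [Function.iterate_succ_apply', hw, hy], by omega⟩
  have hanti : StrictAnti (fun n : ℕ => (rQ (2*k+1))^[n] ((z:ℤ):ℚ)) := by
    apply strictAnti_nat_of_succ_lt
    intro n
    obtain ⟨w, hw, hinv⟩ := aux n
    obtain ⟨y, hy, hy1⟩ := escape_odd_lo k hk w hinv
    simp only [Function.iterate_succ_apply', hw, hy]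
    exact_mod_cast (by omega : y < w)
  exact Set.infinite_range_of_injective hanti.injective

lemma orbit_infinite_hi (d : ℕ) (hd : 2 ≤ d) (z : ℤ) (hz : (d:ℤ)+7 ≤ z) :
    (Set.range fun n : ℕ => (rQ d)^[n] ((z:ℤ):ℚ)).Infinite := by
  have aux : ∀ n : ℕ, ∃ w : ℤ, (rQ d)^[n] ((z:ℤ):ℚ) = (w:ℚ) ∧ (d:ℤ)+7 ≤ w := by
    intro n
    induction n with
    | zero => exact ⟨z, rfl, hz⟩
    | succ n ihn =>
      obtain ⟨w, hw, hinv⟩ := ihn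
      obtain ⟨y, hy, hy1, hy2⟩ := escape_hi_step d hd w hinv
      exact ⟨y, by rw [Function.iterate_succ_apply', hw, hy], hy2⟩
  have hmono : StrictMono (fun n : ℕ => (rQ d)^[n] ((z:ℤ):ℚ)) := by
    apply strictMono_nat_of_lt_succ
    intro n
    obtain ⟨w, hw, hinv⟩ := aux n
    obtain ⟨y, hy, hy1, hy2⟩ := escape_hi_step d hd w hinv
    simp only [Function.iterate_succ_apply', hw, hy]
    exact_mod_cast (by omega : w < y)
  exact Set.infinite_range_of_injective hmono.injective

lemma orbit_infinite_lo_even (k : ℕ) (hk : 1 ≤ k) (z : ℤ) (hz : z ≤ 0) :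
    (Set.range fun n : ℕ => (rQ (2*k))^[n] ((z:ℤ):ℚ)).Infinite := by
  have aux : ∀ n : ℕ, ∃ w : ℤ, (rQ (2*k))^[n] ((z:ℤ):ℚ) = (w:ℚ) ∧ (w ≤ 0 ∨ 2*(k:ℤ)+7 ≤ w) := by
    intro n
    induction n with
    | zero => exact ⟨z, rfl, Or.inl hz⟩
    | succ n ihn =>
      obtain ⟨w, hw, hinv⟩ := ihn
      obtain ⟨y, hy, hy1, hy2⟩ := escape_even k hk w (by push_cast at hinv ⊢; omega)
      exact ⟨y, by rw [Function.iterate_succ_apply', hw, hy], Or.inr (by push_cast at hy2 ⊢; omega)⟩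
  have hmono : StrictMono (fun n : ℕ => (rQ (2*k))^[n] ((z:ℤ):ℚ)) := by
    apply strictMono_nat_of_lt_succ
    intro n
    obtain ⟨w, hw, hinv⟩ := aux n
    obtain ⟨y, hy, hy1, hy2⟩ := escape_even k hk w (by push_cast at hinv ⊢; omega)
    simp only [Function.iterate_succ_apply', hw, hy]
    exact_mod_cast (by omega : w < y)
  exact Set.infinite_range_of_injective hmono.injective

lemma orbit_infinite_padic (d : ℕ) (hd : 2 ≤ d) (x : ℚ) (hint : ¬ ∃ z : ℤ, x = (z:ℚ)) :
    (Set.range fun n : ℕ => (rQ d)^[n] x).Infinite := by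
  obtain ⟨p, hprime, hnorm⟩ := exists_prime_norm_gt hint
  haveI : Fact (Nat.Prime p) := ⟨hprime⟩
  have aux : ∀ n : ℕ, 1 < padicNorm p ((rQ d)^[n] x) := by
    intro n
    induction n with
    | zero => exact hnorm
    | succ n ihn =>
      rw [Function.iterate_succ_apply']
      exact lt_trans ihn (padic_rQ_step d hd _ ihn)
  have hmono : StrictMono (fun n : ℕ => padicNorm p ((rQ d)^[n] x)) := by
    apply strictMono_nat_of_lt_succ
    intro n
    rw [Function.iterate_succ_apply']
    exact padic_rQ_step d hd _ (aux n)
  have hinj : Function.Injective (fun n : ℕ => (rQ d)^[n] x) := by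
    intro a b hab
    apply hmono.injective
    simp only at hab ⊢
    rw [hab]
  exact Set.infinite_range_of_injective hinj

end DH

/-- For `d ≥ 2`, a rational `x` has finite forward orbit under `r_d` (i.e. is preperiodic)
if and only if `x` is an integer with `1 ≤ x ≤ d + 6`. -/
theorem rd_rational_preperiodic (d : ℕ) (hd : 2 ≤ d) (x : ℚ) :
    (Set.range fun n : ℕ => (rQ d)^[n] x).Finite ↔
      ∃ k : ℤ, x = (k : ℚ) ∧ 1 ≤ k ∧ k ≤ (d : ℤ) + 6 := by
  constructor
  · intro hfin
    by_contra hno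
    push_neg at hno
    by_cases hint : ∃ z : ℤ, x = (z:ℚ)
    · obtain ⟨z, rfl⟩ := hint
      have hz : z ≤ 0 ∨ (d:ℤ)+7 ≤ z := by
        have := hno z rfl
        omega
      rcases hz with hz | hz
      · rcases Nat.even_or_odd d with he | ho
        · obtain ⟨k, hk⟩ := he
          have hdk : d = 2*k := by omega
          subst hdk
          exact (DH.orbit_infinite_lo_even k (by omega) z hz) hfin
        · obtain ⟨k, hk⟩ := ho
          have hdk : d = 2*k+1 := by omega
          subst hdk
          exact (DH.orbit_infinite_of_strict_int_lo_odd k (by omega) z hz) hfin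
      · exact (DH.orbit_infinite_hi d hd z hz) hfin
    · exact (DH.orbit_infinite_padic d hd x hint) hfin
  · rintro ⟨z, rfl, h1, h2⟩
    have aux : ∀ n : ℕ, ∃ w : ℤ, (rQ d)^[n] ((z:ℤ):ℚ) = (w:ℚ) ∧ 1 ≤ w ∧ w ≤ (d:ℤ)+6 := by
      intro n
      induction n with
      | zero => exact ⟨z, rfl, h1, h2⟩
      | succ n ihn =>
        obtain ⟨w, hw, hw1, hw2⟩ := ihn
        obtain ⟨y, hy, hy1, hy2⟩ := DH.inrange_step d hd w hw1 hw2
        exact ⟨y, by rw [Function.iterate_succ_apply', hw, hy], hy1, hy2⟩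
    apply Set.Finite.subset (Set.Finite.image (fun w : ℤ => (w:ℚ)) (Set.finite_Icc 1 ((d:ℤ)+6)))
    rintro q ⟨n, rfl⟩
    obtain ⟨w, hw, hw1, hw2⟩ := aux n
    exact ⟨w, Set.mem_Icc.mpr ⟨hw1, hw2⟩, hw.symm⟩
end

section
/- Let s : ℝ → ℝ be a nonzero odd polynomial of degree at least two, let h(x,y) = (y, −x + s(y)), and let R > 0 be such that |s(y)| > 2|y| for all real y with |y| ≥ R. Define D = {(x,y) ∈ ℝ² : |y| ≥ |x| ≥ R} and T = {(x,y) ∈ ℝ² : |x| < R ≤ |y|}. Then for every (x,y) ∈ D ∪ T one has h(x,y) ∈ D and max(|x'|,|y'|) > max(|x|,|y|) where (x',y') = h(x,y). -/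
/-! Both `D` and `T` lie in `{|x| ≤ |y|, R ≤ |y|}`. There `|s(y)| > 2|y|`, so the new coordinate
satisfies `|-x + s(y)| ≥ |s(y)| - |x| > 2|y| - |y| = |y|`: the image lies in `D` and its sup-norm
`|-x + s(y)|` exceeds the old one, `|y|`. -/

lemma abs_lt_abs_neg_add_of_two_mul_lt {x y a : ℝ} (hxy : |x| ≤ |y|) (ha : 2 * |y| < |a|) :
    |y| < |-x + a| :=
  calc |y| < |a| - |x| := by linarith
    _ ≤ |a - x| := abs_sub_abs_le_abs_sub a x
    _ = |-x + a| := by rw [neg_add_eq_sub]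

theorem henon_filtration_general (s : Polynomial ℝ)
    (R : ℝ) (hRs : ∀ y : ℝ, R ≤ |y| → 2 * |y| < |s.eval y|)
    (x y : ℝ)
    (hmem : (R ≤ |x| ∧ |x| ≤ |y|) ∨ (|x| < R ∧ R ≤ |y|)) :
    (R ≤ |y| ∧ |y| ≤ |-x + s.eval y|) ∧ max |x| |y| < max |y| |-x + s.eval y| := by
  obtain ⟨hxy, hRy⟩ : |x| ≤ |y| ∧ R ≤ |y| := by
    rcases hmem with ⟨hRx, hxy⟩ | ⟨hxR, hRy⟩
    · exact ⟨hxy, hRx.trans hxy⟩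
    · exact ⟨hxR.le.trans hRy, hRy⟩
  have hgrow := abs_lt_abs_neg_add_of_two_mul_lt hxy (hRs y hRy)
  refine ⟨⟨hRy, hgrow.le⟩, ?_⟩
  rw [max_eq_right hxy]
  exact lt_max_of_lt_right hgrow

/-- Let `s` be a nonzero odd real polynomial of degree at least two, `h(x,y) = (y, −x + s(y))`,
and `R > 0` with `|s(y)| > 2|y|` whenever `|y| ≥ R`.  For `D = {(x,y) : |y| ≥ |x| ≥ R}` and
`T = {(x,y) : |x| < R ≤ |y|}`, every point of `D ∪ T` is mapped into `D` by `h`, and its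
sup-norm strictly increases. -/
theorem henon_filtration (s : Polynomial ℝ) (hs : s ≠ 0)
    (hodd : ∀ t : ℝ, s.eval (-t) = -s.eval t) (hdeg : 2 ≤ s.natDegree)
    (R : ℝ) (hR : 0 < R) (hRs : ∀ y : ℝ, R ≤ |y| → 2 * |y| < |s.eval y|)
    (x y : ℝ)
    (hmem : (R ≤ |x| ∧ |x| ≤ |y|) ∨ (|x| < R ∧ R ≤ |y|)) :
    (R ≤ |y| ∧ |y| ≤ |-x + s.eval y|) ∧ max |x| |y| < max |y| |-x + s.eval y| :=
  henon_filtration_general s R hRs x y hmem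
end

section
/- Let d ≥ 3 be an odd integer. Then every rational periodic point (x,y) ∈ ℚ² of the Hénon map h_d(x,y) = (y, −x + s_d(y)) has integer coordinates and satisfies max(|x|,|y|) ≤ (d+5)/2. -/
/-- The Hénon map `h_d(x,y) = (y, −x + s_d(y))` on `ℚ²`. -/
def henonQ (d : ℕ) (P : ℚ × ℚ) : ℚ × ℚ := (P.2, -P.1 + sQ d P.2)


/-- alternating sum `U k t = Σ_{j≤k} (-1)^{k-j} C(t+j, 2j+1)` -/
def UU (k t : ℕ) : ℤ :=
  ∑ j ∈ Finset.range (k + 1), (-1 : ℤ) ^ (k - j) * ((t + j).choose (2 * j + 1) : ℤ)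

def VV (k t : ℕ) : ℤ :=
  ∑ j ∈ Finset.range (k + 1), (-1 : ℤ) ^ (k - j) * ((t + j).choose (2 * j) : ℤ)

lemma UU_succ_t (k t : ℕ) : UU k (t + 1) = UU k t + VV k t := by
  rw [UU, UU, VV, ← Finset.sum_add_distrib]
  refine Finset.sum_congr rfl fun j hj => ?_
  have : t + 1 + j = (t + j) + 1 := by ring
  rw [this, Nat.choose_succ_succ' (t + j) (2 * j)]
  push_cast
  ring

lemma UU_succ_k (k t : ℕ) :
    UU (k + 1) t = ((t + k + 1).choose (2 * k + 3) : ℤ) - UU k t := by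
  rw [UU, UU, Finset.sum_range_succ]
  have h1 : k + 1 - (k + 1) = 0 := by omega
  have h2 : ∀ j ∈ Finset.range (k + 1),
      (-1 : ℤ) ^ (k + 1 - j) * ((t + j).choose (2 * j + 1) : ℤ)
      = -((-1 : ℤ) ^ (k - j) * ((t + j).choose (2 * j + 1) : ℤ)) := by
    intro j hj
    have hj' : j ≤ k := by simpa [Nat.lt_succ_iff] using hj
    have : k + 1 - j = (k - j) + 1 := by omega
    rw [this, pow_succ]
    ring
  rw [Finset.sum_congr rfl h2, Finset.sum_neg_distrib]
  rw [h1]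
  have : 2 * (k + 1) + 1 = 2 * k + 3 := by ring
  rw [this]
  have : t + (k + 1) = t + k + 1 := by ring
  rw [this]
  ring

lemma VV_succ_k (k t : ℕ) :
    VV (k + 1) t = ((t + k + 1).choose (2 * k + 2) : ℤ) - VV k t := by
  rw [VV, VV, Finset.sum_range_succ]
  have h1 : k + 1 - (k + 1) = 0 := by omega
  have h2 : ∀ j ∈ Finset.range (k + 1),
      (-1 : ℤ) ^ (k + 1 - j) * ((t + j).choose (2 * j) : ℤ)
      = -((-1 : ℤ) ^ (k - j) * ((t + j).choose (2 * j) : ℤ)) := by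
    intro j hj
    have hj' : j ≤ k := by simpa [Nat.lt_succ_iff] using hj
    have : k + 1 - j = (k - j) + 1 := by omega
    rw [this, pow_succ]
    ring
  rw [Finset.sum_congr rfl h2, Finset.sum_neg_distrib]
  rw [h1]
  have : 2 * (k + 1) = 2 * k + 2 := by ring
  rw [this]
  have : t + (k + 1) = t + k + 1 := by ring
  rw [this]
  ring

lemma VV_succ_t (k t : ℕ) : VV (k + 1) (t + 1) = VV (k + 1) t + UU k (t + 1) := by
  have expand : ∀ s : ℕ, VV (k+1) s
      = (-1:ℤ)^(k+1) * (s.choose 0 : ℤ)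
        + ∑ i ∈ Finset.range (k+1), (-1:ℤ)^(k-i) * ((s + (i+1)).choose (2*(i+1)) : ℤ) := by
    intro s
    rw [VV, Finset.sum_range_succ']
    have h2 : ∀ i ∈ Finset.range (k + 1),
        (-1 : ℤ) ^ (k + 1 - (i+1)) * ((s + (i+1)).choose (2 * (i+1)) : ℤ)
        = (-1 : ℤ) ^ (k - i) * ((s + (i+1)).choose (2 * (i+1)) : ℤ) := by
      intro i hi
      congr 2
      omega
    rw [Finset.sum_congr rfl h2]
    simp [add_comm]
  rw [expand (t+1), expand t, UU]
  have h3 : ∀ i ∈ Finset.range (k+1),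
      (-1:ℤ)^(k-i) * (((t+1) + (i+1)).choose (2*(i+1)) : ℤ)
      = (-1:ℤ)^(k-i) * ((t + (i+1)).choose (2*(i+1)) : ℤ)
        + (-1:ℤ)^(k-i) * (((t+1) + i).choose (2*i+1) : ℤ) := by
    intro i hi
    have e1 : (t+1) + (i+1) = (t + (i+1)) + 1 := by ring
    have e2 : 2 * (i+1) = (2*i+1) + 1 := by ring
    rw [e1, e2, Nat.choose_succ_succ' (t + (i+1)) (2*i+1)]
    have e3 : t + (i + 1) = t + 1 + i := by ring
    rw [e3]
    push_cast
    ring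
  rw [Finset.sum_congr rfl h3, Finset.sum_add_distrib]
  simp
  ring

def EE (k : ℕ) : ℤ := if k % 3 = 0 then -1 else if k % 3 = 1 then 1 else 0

def XX (k : ℕ) : ℤ := 2 * k ^ 2 + 7 * k + 5 + EE k

def YY : ℕ → ℤ
  | 0 => 0
  | 1 => 14
  | (k + 2) => ((2 * k + 7).choose 3 : ℤ) + XX (k + 1)

lemma two_choose_two (n : ℕ) :
    (((n + 2).choose 2 : ℤ)) * 2 = (n + 1) * (n + 2) := by
  induction n with
  | zero => decide
  | succ l ih =>
    have : l + 1 + 2 = (l + 2) + 1 := by ring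
    rw [this, Nat.choose_succ_succ' (l + 2) 1, Nat.choose_one_right]
    push_cast
    push_cast at ih
    nlinarith [ih]

lemma six_choose_three (n : ℕ) :
    (((n + 3).choose 3 : ℤ)) * 6 = (n + 1) * (n + 2) * (n + 3) := by
  induction n with
  | zero => decide
  | succ m ih =>
    have : m + 1 + 3 = (m + 3) + 1 := by ring
    rw [this, Nat.choose_succ_succ' (m + 3) 2]
    have h2 := two_choose_two (m + 1)
    have e : m + 1 + 2 = m + 3 := by ring
    rw [e] at h2
    push_cast
    push_cast at ih h2
    nlinarith [ih, h2]

lemma EE_sum (m : ℕ) : EE (m + 3) + EE (m + 2) + EE (m + 1) = 0 := by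
  have h : m % 3 = 0 ∨ m % 3 = 1 ∨ m % 3 = 2 := by omega
  have e1 : (m + 3) % 3 = m % 3 := by omega
  rcases h with h | h | h <;>
    · simp only [EE, e1, h]
      have e2 : (m + 2) % 3 = (m + 2) % 3 := rfl
      norm_num
      omega

lemma EE_bounds (k : ℕ) : -1 ≤ EE k ∧ EE k ≤ 1 := by
  unfold EE
  split
  · norm_num
  · split <;> norm_num

lemma idX (m : ℕ) : XX (m + 2) = ((2 * m + 8).choose 3 : ℤ) - XX (m + 1) - YY (m + 1) := by
  cases m with
  | zero => decide
  | succ n =>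
    have hYY : YY (n + 2) = ((2 * n + 7).choose 3 : ℤ) + XX (n + 1) := rfl
    have h2 := six_choose_three (2 * n + 7)
    have h3 := six_choose_three (2 * n + 4)
    have h5 := EE_sum n
    have e1 : 2 * n + 7 + 3 = 2 * (n + 1) + 8 := by ring
    have e2 : 2 * n + 4 + 3 = 2 * n + 7 := by ring
    rw [e1] at h2
    rw [e2] at h3
    have key : XX (n + 3) * 6 + XX (n + 2) * 6 + XX (n + 1) * 6
        + ((2 * n + 7).choose 3 : ℤ) * 6 = ((2 * (n + 1) + 8).choose 3 : ℤ) * 6 := by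
      rw [h2, h3]
      show (2*(n+3:ℕ)^2 + 7*(n+3:ℕ) + 5 + EE (n+3)) * 6
          + (2*(n+2:ℕ)^2 + 7*(n+2:ℕ) + 5 + EE (n+2)) * 6
          + (2*(n+1:ℕ)^2 + 7*(n+1:ℕ) + 5 + EE (n+1)) * 6
          + ((2*(n:ℤ) + 4 + 1) * (2*n + 4 + 2) * (2*n + 4 + 3))
          = (2*(n:ℤ) + 7 + 1) * (2*n + 7 + 2) * (2*n + 7 + 3)
      push_cast
      linear_combination 6 * h5
    have egoal : n + 1 + 2 = n + 3 := by ring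
    rw [egoal, hYY]
    linarith [key]

lemma diag : ∀ k, 1 ≤ k → UU k (k + 4) = XX k ∧ VV k (k + 4) = YY k := by
  intro k hk
  induction k, hk using Nat.le_induction with
  | base => constructor <;> decide
  | succ m hm ih =>
    obtain ⟨p, rfl⟩ : ∃ p, m = p + 1 := ⟨m - 1, by omega⟩
    obtain ⟨hU, hV⟩ := ih
    -- a : UU (p+1) (p+6) = XX (p+1) + YY (p+1)
    have ha : UU (p + 1) (p + 6) = XX (p + 1) + YY (p + 1) := by
      have := UU_succ_t (p + 1) (p + 5)
      have e : p + 1 + 4 = p + 5 := by ring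
      rw [e] at hU hV
      rw [show p + 6 = p + 5 + 1 by ring, this, hU, hV]
    constructor
    · -- UU (p+2) (p+6) = XX (p+2)
      have hb := UU_succ_k (p + 1) (p + 6)
      have e1 : p + 6 + (p + 1) + 1 = 2 * p + 8 := by ring
      have e2 : 2 * (p + 1) + 3 = 2 * p + 8 - 3 := by omega
      rw [e1, e2, Nat.choose_symm (by omega), ha] at hb
      have e3 : p + 1 + 1 + 4 = p + 6 := by ring
      rw [e3, hb, idX p]
      ring
    · -- VV (p+2) (p+6) = YY (p+2)
      have hup : UU p (p + 6) = ((2 * p + 7).choose 4 : ℤ) - (XX (p + 1) + YY (p + 1)) := by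
        have hc := UU_succ_k p (p + 6)
        have e1 : p + 6 + p + 1 = 2 * p + 7 := by ring
        have e2 : 2 * p + 3 = 2 * p + 7 - 4 := by omega
        rw [e1, e2, Nat.choose_symm (by omega), ha] at hc
        linarith [hc]
      have hv6 : VV (p + 1) (p + 6) = YY (p + 1) + UU p (p + 6) := by
        have := VV_succ_t p (p + 5)
        have e : p + 1 + 4 = p + 5 := by ring
        rw [e] at hV
        rw [show p + 6 = p + 5 + 1 by ring, this, hV]
      have hd := VV_succ_k (p + 1) (p + 6)
      have e1 : p + 6 + (p + 1) + 1 = 2 * p + 8 := by ring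
      have e2 : 2 * (p + 1) + 2 = 2 * p + 8 - 4 := by omega
      rw [e1, e2, Nat.choose_symm (by omega), hv6, hup] at hd
      have pascal : ((2 * p + 8).choose 4 : ℤ)
          = ((2 * p + 7).choose 3 : ℤ) + ((2 * p + 7).choose 4 : ℤ) := by
        rw [show 2 * p + 8 = (2 * p + 7) + 1 by ring, Nat.choose_succ_succ' (2 * p + 7) 3]
        push_cast; ring
      have e3 : p + 1 + 1 + 4 = p + 6 := by ring
      have hYY : YY (p + 2) = ((2 * p + 7).choose 3 : ℤ) + XX (p + 1) := rfl
      rw [e3, hd, pascal, hYY]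
      ring

lemma XX_ge (k : ℕ) (hk : 1 ≤ k) : 2 * (k : ℤ) + 9 ≤ XX k := by
  have h := (EE_bounds k).1
  have hk' : (1 : ℤ) ≤ (k : ℤ) := by exact_mod_cast hk
  unfold XX
  nlinarith [hk', h]

lemma YY_ge (k : ℕ) (hk : 1 ≤ k) : 2 ≤ YY k := by
  match k, hk with
  | 1, _ => decide
  | (p + 2), _ =>
    have h1 : (0 : ℤ) ≤ ((2 * p + 7).choose 3 : ℤ) := by positivity
    have h2 := XX_ge (p + 1) (by omega)
    have : YY (p + 2) = ((2 * p + 7).choose 3 : ℤ) + XX (p + 1) := rfl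
    rw [this]
    have : (0 : ℤ) ≤ (p + 1 : ℕ) := by positivity
    linarith

lemma UU_zero_nonneg (s : ℕ) : 0 ≤ UU 0 s := by
  simp [UU]

lemma main_growth : ∀ k, 1 ≤ k → ∀ t : ℕ, k + 4 ≤ t →
    2 * (t : ℤ) + 1 ≤ UU k t ∧ 2 ≤ VV k t := by
  intro k hk
  induction k, hk using Nat.le_induction with
  | base =>
    intro t ht
    induction t, ht using Nat.le_induction with
    | base => refine ⟨by decide, by decide⟩
    | succ t ht iht =>
      obtain ⟨h1, h2⟩ := iht
      constructor
      · rw [UU_succ_t]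
        push_cast
        linarith
      · rw [show (1 : ℕ) = 0 + 1 by rfl, VV_succ_t]
        have := UU_zero_nonneg (t + 1)
        linarith
  | succ k hk ih =>
    intro t ht
    induction t, ht using Nat.le_induction with
    | base =>
      obtain ⟨hU, hV⟩ := diag (k + 1) (by omega)
      rw [show k + 1 + 4 = k + 5 by ring] at hU hV
      have hx := XX_ge (k + 1) (by omega)
      have hy := YY_ge (k + 1) (by omega)
      constructor
      · rw [hU]; push_cast; push_cast at hx; linarith
      · rw [hV]; linarith [YY_ge (k + 1) (by omega : 1 ≤ k + 1)]
    | succ t ht iht =>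
      obtain ⟨h1, h2⟩ := iht
      constructor
      · rw [UU_succ_t]
        push_cast
        linarith
      · rw [VV_succ_t]
        have := (ih (t + 1) (by omega)).1
        have ht1 : (0 : ℤ) ≤ 2 * ((t : ℤ) + 1) + 1 := by positivity
        push_cast at this
        linarith
lemma prod_desc (j a : ℕ) :
    (a : ℚ) * ∏ i ∈ Finset.Icc 1 j, ((a : ℚ) ^ 2 - (i : ℚ) ^ 2)
      = ((a + j).descFactorial (2 * j + 1) : ℚ) := by
  induction j with
  | zero => simp [Nat.descFactorial_one]
  | succ j ih =>
    rw [Finset.prod_Icc_succ_top (by omega : 1 ≤ j + 1), ← mul_assoc]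
    have e : a + (j + 1) = (a + j) + 1 := by ring
    have e2 : 2 * (j + 1) + 1 = (2 * j + 2) + 1 := by ring
    rw [e, e2, Nat.succ_descFactorial_succ (a + j) (2 * j + 2),
      show 2 * j + 2 = (2 * j + 1) + 1 by rfl,
      Nat.descFactorial_succ (a + j) (2 * j + 1)]
    by_cases hcase : j + 1 ≤ a
    · have hsub : a + j - (2 * j + 1) = a - (j + 1) := by omega
      rw [hsub]
      push_cast [Nat.cast_sub hcase]
      rw [ih]
      push_cast
      ring
    · have hzero : (a + j).descFactorial (2 * j + 1) = 0 := by
        rw [Nat.descFactorial_eq_zero_iff_lt]; omega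
      rw [hzero] at ih
      rw [hzero]
      push_cast
      push_cast at ih
      rw [ih]
      ring

lemma cQ_nat (j a : ℕ) : cQ (2 * j + 1) (a : ℚ) = (((a + j).choose (2 * j + 1) : ℕ) : ℚ) := by
  have hmod : (2 * j + 1) % 2 = 1 := by omega
  have hdiv : (2 * j + 1) / 2 = j := by omega
  rw [cQ, if_neg (by omega), hdiv, mul_assoc, prod_desc j a,
    Nat.descFactorial_eq_factorial_mul_choose (a + j) (2 * j + 1)]
  have hfac : ((2 * j + 1).factorial : ℚ) ≠ 0 := by
    exact_mod_cast (2 * j + 1).factorial_ne_zero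
  push_cast
  field_simp

lemma sQ_eq_UU (k a : ℕ) : sQ (2 * k + 1) (a : ℚ) = ((UU k a : ℤ) : ℚ) := by
  have hmod : (2 * k + 1) % 2 = 1 := by omega
  have hdiv : (2 * k + 1) / 2 = k := by omega
  rw [sQ, hmod, hdiv, UU]
  push_cast
  refine Finset.sum_congr rfl fun j hj => ?_
  rw [cQ_nat j a]

lemma cQ_odd_neg (j : ℕ) (x : ℚ) : cQ (2 * j + 1) (-x) = -cQ (2 * j + 1) x := by
  rw [cQ, cQ, if_neg (by omega), if_neg (by omega)]
  simp only [neg_sq]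
  ring

lemma sQ_odd_neg (k : ℕ) (x : ℚ) : sQ (2 * k + 1) (-x) = -sQ (2 * k + 1) x := by
  have hmod : (2 * k + 1) % 2 = 1 := by omega
  rw [sQ, sQ, hmod]
  rw [← Finset.sum_neg_distrib]
  refine Finset.sum_congr rfl fun j hj => ?_
  rw [cQ_odd_neg j x]
  ring

def SZ (k : ℕ) (b : ℤ) : ℤ := if 0 ≤ b then UU k b.toNat else -UU k (-b).toNat

lemma sQ_int (k : ℕ) (b : ℤ) : sQ (2 * k + 1) (b : ℚ) = ((SZ k b : ℤ) : ℚ) := by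
  rw [SZ]
  by_cases hb : 0 ≤ b
  · rw [if_pos hb]
    have : (b : ℚ) = ((b.toNat : ℕ) : ℚ) := by
      exact_mod_cast (congrArg (fun z : ℤ => (z : ℚ)) (Int.toNat_of_nonneg hb)).symm
    rw [this, sQ_eq_UU]
  · rw [if_neg hb]
    have h1 : (b : ℚ) = -(((-b).toNat : ℕ) : ℚ) := by
      have h2 := Int.toNat_of_nonneg (by omega : (0:ℤ) ≤ -b)
      have h3 := congrArg (fun z : ℤ => (z : ℚ)) h2
      push_cast at h3
      linarith [h3]
    rw [h1, sQ_odd_neg, sQ_eq_UU]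
    push_cast
    ring
variable {p : ℕ} [hp : Fact p.Prime]

lemma padicNorm_dominant_add (a b : ℚ) (h : padicNorm p b < padicNorm p a) :
    padicNorm p (a + b) = padicNorm p a := by
  rw [padicNorm.add_eq_max_of_ne (ne_of_gt h)]
  exact max_eq_left h.le

lemma padicNorm_neg_one_pow_mul (e : ℕ) (x : ℚ) :
    padicNorm p ((-1 : ℚ) ^ e * x) = padicNorm p x := by
  rcases Nat.even_or_odd e with he | he
  · rw [he.neg_one_pow, one_mul]
  · rw [he.neg_one_pow, neg_one_mul, padicNorm.neg]

lemma padicNorm_inv_factorial_ge_one (m : ℕ) :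
    1 ≤ padicNorm p (1 / (m.factorial : ℚ)) := by
  have h1 : padicNorm p ((m.factorial : ℚ)) ≤ 1 := padicNorm.of_nat m.factorial
  have h2 : (0:ℚ) < padicNorm p ((m.factorial : ℚ)) := by
    have : ((m.factorial : ℚ)) ≠ 0 := by exact_mod_cast m.factorial_ne_zero
    have := padicNorm.nonzero (p := p) this
    rcases lt_or_eq_of_le (padicNorm.nonneg (p := p) ((m.factorial : ℚ))) with h | h
    · exact h
    · exact absurd h.symm this
  rw [padicNorm.div, padicNorm.one]
  exact one_le_one_div h2 h1

lemma padicNorm_inv_factorial_mono {m n : ℕ} (h : m ≤ n) :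
    padicNorm p (1 / (m.factorial : ℚ)) ≤ padicNorm p (1 / (n.factorial : ℚ)) := by
  obtain ⟨c, hc⟩ := Nat.factorial_dvd_factorial h
  have hcq : ((n.factorial : ℚ)) = (m.factorial : ℚ) * (c : ℚ) := by exact_mod_cast hc
  have hmpos : (0:ℚ) < padicNorm p ((m.factorial : ℚ)) := by
    have : ((m.factorial : ℚ)) ≠ 0 := by exact_mod_cast m.factorial_ne_zero
    exact lt_of_le_of_ne (padicNorm.nonneg _) (Ne.symm (padicNorm.nonzero this))
  have hnpos : (0:ℚ) < padicNorm p ((n.factorial : ℚ)) := by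
    have : ((n.factorial : ℚ)) ≠ 0 := by exact_mod_cast n.factorial_ne_zero
    exact lt_of_le_of_ne (padicNorm.nonneg _) (Ne.symm (padicNorm.nonzero this))
  have hle : padicNorm p ((n.factorial : ℚ)) ≤ padicNorm p ((m.factorial : ℚ)) := by
    rw [hcq, padicNorm.mul]
    have := padicNorm.of_nat (p := p) c
    nlinarith [padicNorm.nonneg (p := p) ((c:ℚ))]
  rw [padicNorm.div, padicNorm.div, padicNorm.one]
  exact one_div_le_one_div_of_le hnpos hle

lemma padicNorm_prod {ι : Type*} (s : Finset ι) (f : ι → ℚ) :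
    padicNorm p (∏ i ∈ s, f i) = ∏ i ∈ s, padicNorm p (f i) := by
  classical
  induction s using Finset.induction_on with
  | empty => simp [padicNorm.one]
  | insert _ _ hni ih =>
    rw [Finset.prod_insert hni, Finset.prod_insert hni, padicNorm.mul, ih]

lemma padicNorm_cQ (j : ℕ) (z : ℚ) (hz : 1 < padicNorm p z) :
    padicNorm p (cQ (2 * j + 1) z)
      = padicNorm p (1 / ((2 * j + 1).factorial : ℚ)) * padicNorm p z ^ (2 * j + 1) := by
  have hdiv : (2 * j + 1) / 2 = j := by omega
  rw [cQ, if_neg (by omega), hdiv, padicNorm.mul, padicNorm.mul]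
  have hprod : padicNorm p (∏ i ∈ Finset.Icc 1 j, (z ^ 2 - (i : ℚ) ^ 2))
      = padicNorm p z ^ (2 * j) := by
    have hfac : ∀ i ∈ Finset.Icc 1 j, padicNorm p (z ^ 2 - (i : ℚ) ^ 2)
        = padicNorm p z ^ 2 := by
      intro i hi
      have hz2 : padicNorm p (z ^ 2) = padicNorm p z ^ 2 := by
        rw [sq, padicNorm.mul, sq]
      have hi2 : padicNorm p ((i : ℚ) ^ 2) ≤ 1 := by
        have : ((i : ℚ) ^ 2) = (((i ^ 2 : ℕ) : ℚ)) := by push_cast; ring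
        rw [this]
        exact padicNorm.of_nat _
      have hlt : padicNorm p (-(i : ℚ) ^ 2) < padicNorm p (z ^ 2) := by
        rw [padicNorm.neg, hz2]
        nlinarith [padicNorm.nonneg (p := p) ((i:ℚ)^2)]
      rw [sub_eq_add_neg, padicNorm_dominant_add (z ^ 2) (-(i : ℚ) ^ 2) hlt, hz2]
    rw [padicNorm_prod, Finset.prod_congr rfl hfac, Finset.prod_const, Nat.card_Icc, ← pow_mul]
    congr 1
  rw [hprod, pow_succ, pow_mul, mul_assoc]
  congr 1
  rw [sq]
  ring

lemma padic_sQ (k : ℕ) (hk : 1 ≤ k) (z : ℚ) (hz : 1 < padicNorm p z) :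
    padicNorm p z < padicNorm p (sQ (2 * k + 1) z) := by
  have hmod : (2 * k + 1) % 2 = 1 := by omega
  have hdiv : (2 * k + 1) / 2 = k := by omega
  set N := padicNorm p z with hN
  set A := padicNorm p (1 / ((2 * k + 1).factorial : ℚ)) * N ^ (2 * k + 1) with hA
  have hNA : N < A := by
    have h1 := padicNorm_inv_factorial_ge_one (p := p) (2 * k + 1)
    have h2 : N ^ 3 ≤ N ^ (2 * k + 1) := pow_le_pow_right₀ (by linarith) (by omega)
    have hNpos : (0:ℚ) < N := by linarith
    have h2a : N < N ^ 2 := by nlinarith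
    have h3 : N < N ^ 3 := by nlinarith [mul_lt_mul_of_pos_right h2a hNpos]
    nlinarith [pow_pos (by linarith : (0:ℚ) < N) (2 * k + 1)]
  have hterm : ∀ j, padicNorm p ((-1 : ℚ) ^ (k - j) * cQ (2 * j + 1) z)
      = padicNorm p (1 / ((2 * j + 1).factorial : ℚ)) * N ^ (2 * j + 1) := by
    intro j
    rw [padicNorm_neg_one_pow_mul, padicNorm_cQ j z hz]
  have hrest : padicNorm p (∑ j ∈ Finset.range k,
      (-1 : ℚ) ^ (k - j) * cQ (2 * j + 1) z) < A := by
    apply padicNorm.sum_lt'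
    · intro j hj
      rw [hterm j]
      have hjk : j < k := Finset.mem_range.mp hj
      have hmono := padicNorm_inv_factorial_mono (p := p)
        (by omega : 2 * j + 1 ≤ 2 * k + 1)
      have hpow : N ^ (2 * j + 1) < N ^ (2 * k + 1) :=
        pow_lt_pow_right₀ hz (by omega)
      have h1 := padicNorm_inv_factorial_ge_one (p := p) (2 * j + 1)
      have hpowpos : (0:ℚ) < N ^ (2 * j + 1) := pow_pos (by linarith) _
      nlinarith
    · nlinarith [padicNorm_inv_factorial_ge_one (p := p) (2 * k + 1),
        pow_pos (by linarith : (0:ℚ) < N) (2 * k + 1)]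
  have hsplit : sQ (2 * k + 1) z
      = (-1 : ℚ) ^ (k - k) * cQ (2 * k + 1) z
        + ∑ j ∈ Finset.range k, (-1 : ℚ) ^ (k - j) * cQ (2 * j + 1) z := by
    rw [sQ, hmod, hdiv, Finset.sum_range_succ]
    ring
  have htop : padicNorm p ((-1 : ℚ) ^ (k - k) * cQ (2 * k + 1) z) = A := hterm k
  rw [hsplit, padicNorm_dominant_add _ _ (by rw [htop]; exact hrest), htop]
  exact hNA

lemma SZ_bound (k : ℕ) (hk : 1 ≤ k) (b : ℤ) (hb : (k : ℤ) + 4 ≤ |b|) :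
    2 * |b| + 1 ≤ |SZ k b| := by
  rw [SZ]
  by_cases h : 0 ≤ b
  · rw [if_pos h]
    rw [abs_of_nonneg h] at hb
    have htn : k + 4 ≤ b.toNat := by omega
    have hm := (main_growth k hk b.toNat htn).1
    have hcast : (b.toNat : ℤ) = b := Int.toNat_of_nonneg h
    rw [hcast] at hm
    rw [abs_of_nonneg (by linarith : (0:ℤ) ≤ UU k b.toNat), abs_of_nonneg h]
    linarith
  · rw [if_neg h]
    have hb0 : b < 0 := by omega
    rw [abs_of_neg hb0] at hb
    have htn : k + 4 ≤ (-b).toNat := by omega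
    have hm := (main_growth k hk (-b).toNat htn).1
    have hcast : ((-b).toNat : ℤ) = -b := Int.toNat_of_nonneg (by omega)
    rw [hcast] at hm
    rw [abs_neg, abs_of_nonneg (by linarith : (0:ℤ) ≤ UU k (-b).toNat), abs_of_neg hb0]
    linarith

lemma int_of_padicNorm (q : ℚ) (h : ∀ p : ℕ, p.Prime → padicNorm p q ≤ 1) :
    ∃ a : ℤ, q = (a : ℚ) := by
  by_cases hden : q.den = 1
  · exact ⟨q.num, ((Rat.den_eq_one_iff q).mp hden).symm⟩
  exfalso
  set p := q.den.minFac with hpdef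
  have hp : p.Prime := Nat.minFac_prime hden
  haveI := Fact.mk hp
  have hdvd : p ∣ q.den := Nat.minFac_dvd _
  have hnum : ¬ (p : ℤ) ∣ q.num := by
    intro hcon
    have h1 : p ∣ q.num.natAbs := Int.natCast_dvd_natCast.mp (by
      rwa [Int.dvd_natAbs])
    have hco := q.reduced
    have hdg : p ∣ Nat.gcd q.num.natAbs q.den := Nat.dvd_gcd h1 hdvd
    rw [Nat.Coprime] at hco
    rw [hco] at hdg
    exact hp.one_lt.ne' (Nat.dvd_one.mp hdg)
  have hq : q = (q.num : ℚ) / (q.den : ℚ) := (Rat.num_div_den q).symm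
  have hnormnum : padicNorm p (q.num : ℚ) = 1 := (padicNorm.int_eq_one_iff _).mpr hnum
  have hnormden : padicNorm p (q.den : ℚ) < 1 := (padicNorm.nat_lt_one_iff _).mpr hdvd
  have hdenpos : (0:ℚ) < padicNorm p (q.den : ℚ) := by
    have hne : ((q.den : ℚ)) ≠ 0 := by
      exact_mod_cast q.den_nz
    exact lt_of_le_of_ne (padicNorm.nonneg _) (Ne.symm (padicNorm.nonzero hne))
  have : padicNorm p q = 1 / padicNorm p (q.den : ℚ) := by
    conv_lhs => rw [hq]
    rw [padicNorm.div, hnormnum]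
  have hgt : 1 < padicNorm p q := by
    rw [this]
    rw [lt_div_iff₀ hdenpos]
    linarith
  exact absurd (h p hp) (not_le.mpr hgt)

/-- For odd `d ≥ 3`, every rational periodic point `(x,y)` of `h_d` has integer
coordinates and satisfies `max(|x|,|y|) ≤ (d+5)/2`. -/
theorem henon_periodic_integral_bounded (d : ℕ) (hodd : Odd d) (hd : 3 ≤ d) (P : ℚ × ℚ)
    (hper : ∃ n : ℕ, 1 ≤ n ∧ (henonQ d)^[n] P = P) :
    (∃ a b : ℤ, P = ((a : ℚ), (b : ℚ))) ∧ max |P.1| |P.2| ≤ ((d : ℚ) + 5) / 2 := by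
  obtain ⟨n, hn, hper⟩ := hper
  obtain ⟨k, rfl⟩ : ∃ k, d = 2 * k + 1 := by
    obtain ⟨r, hr⟩ := hodd; exact ⟨r, by omega⟩
  have hk : 1 ≤ k := by omega
  obtain ⟨m, rfl⟩ : ∃ m, n = m + 1 := ⟨n - 1, by omega⟩
  set F := henonQ (2 * k + 1) with hF
  set x : ℕ → ℚ := fun i => (F^[i] P).1 with hxdef
  have hsnd : ∀ i, (F^[i] P).2 = x (i + 1) := by
    intro i
    show (F^[i] P).2 = (F^[i+1] P).1
    rw [Function.iterate_succ_apply' F i P]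
    rfl
  have hrec : ∀ i, x (i + 2) = - x i + sQ (2 * k + 1) (x (i + 1)) := by
    intro i
    show (F^[i+2] P).1 = _
    rw [Function.iterate_succ_apply' F (i+1) P]
    have h1 : (F ((F^[i+1]) P)).1 = (F^[i+1] P).2 := rfl
    rw [h1, Function.iterate_succ_apply' F i P]
    show - (F^[i] P).1 + sQ (2*k+1) ((F^[i] P).2) = _
    rw [hsnd i]
  have hperiod : ∀ i, x (i + (m + 1)) = x i := by
    intro i
    show (F^[i + (m+1)] P).1 = _
    rw [Function.iterate_add_apply F i (m+1) P, hper]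
  have hmod : ∀ i, x i = x (i % (m + 1)) := by
    have hper2 : ∀ r q : ℕ, x (r + (m + 1) * q) = x r := by
      intro r q
      induction q with
      | zero => simp
      | succ q ih =>
        rw [show r + (m+1) * (q+1) = (r + (m+1) * q) + (m+1) by ring, hperiod, ih]
    intro i
    conv_lhs => rw [show i = i % (m+1) + (m+1) * (i / (m+1)) from (Nat.mod_add_div i (m+1)).symm]
    exact hper2 _ _
  -- integrality
  have hnorm : ∀ (p : ℕ), p.Prime → ∀ i, padicNorm p (x i) ≤ 1 := by
    intro p hpp
    haveI := Fact.mk hpp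
    by_contra hcon
    push_neg at hcon
    obtain ⟨i₂, hi₂⟩ := hcon
    obtain ⟨i₀, hi₀mem, hi₀max⟩ := Finset.exists_max_image (Finset.range (m+1))
      (fun i => padicNorm p (x i)) ⟨0, Finset.mem_range.mpr (by omega)⟩
    have hmax : ∀ i, padicNorm p (x i) ≤ padicNorm p (x i₀) := by
      intro i
      rw [hmod i]
      exact hi₀max _ (Finset.mem_range.mpr (Nat.mod_lt _ (by omega)))
    have hN : 1 < padicNorm p (x i₀) := lt_of_lt_of_le hi₂ (hmax i₂)
    have hidx : x (i₀ + m + 1) = x i₀ := by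
      rw [show i₀ + m + 1 = i₀ + (m + 1) by ring]
      exact hperiod i₀
    have h1 := hrec (i₀ + m)
    rw [hidx] at h1
    have hs := padic_sQ k hk (x i₀) hN
    have h2 : padicNorm p (x (i₀ + m + 2)) = padicNorm p (sQ (2*k+1) (x i₀)) := by
      rw [h1, add_comm, padicNorm_dominant_add]
      rw [padicNorm.neg]
      exact lt_of_le_of_lt (hmax (i₀ + m)) hs
    have h3 := hmax (i₀ + m + 2)
    rw [h2] at h3
    linarith
  have hint : ∀ i, ∃ a : ℤ, x i = (a : ℚ) :=
    fun i => int_of_padicNorm _ (fun p hp => hnorm p hp i)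
  choose a ha using hint
  have harec : ∀ i, (a (i + 2) : ℤ) = - a i + SZ k (a (i + 1)) := by
    intro i
    have h1 := hrec i
    rw [ha, ha, ha, sQ_int] at h1
    exact_mod_cast h1
  obtain ⟨i₁, hi₁mem, hi₁max⟩ := Finset.exists_max_image (Finset.range (m+1))
    (fun i => |a i|) ⟨0, Finset.mem_range.mpr (by omega)⟩
  have hamod : ∀ i, |a i| ≤ |a i₁| := by
    intro i
    have hxe : x i = x (i % (m+1)) := hmod i
    rw [ha, ha] at hxe
    have hae : a i = a (i % (m+1)) := by exact_mod_cast hxe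
    rw [hae]
    exact hi₁max _ (Finset.mem_range.mpr (Nat.mod_lt _ (by omega)))
  have hMle : |a i₁| ≤ (k : ℤ) + 3 := by
    by_contra hM
    push_neg at hM
    have hM' : (k : ℤ) + 4 ≤ |a i₁| := by omega
    have hidx : a (i₁ + m + 1) = a i₁ := by
      have hxe : x (i₁ + m + 1) = x i₁ := by
        rw [show i₁ + m + 1 = i₁ + (m + 1) by ring]
        exact hperiod i₁
      rw [ha, ha] at hxe
      exact_mod_cast hxe
    have h1 := harec (i₁ + m)
    rw [hidx] at h1
    have hb := SZ_bound k hk (a i₁) hM'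
    have h2 : SZ k (a i₁) = a (i₁ + m + 2) + a (i₁ + m) := by linarith [h1]
    have h3 : |SZ k (a i₁)| ≤ |a (i₁ + m + 2)| + |a (i₁ + m)| := by
      rw [h2]; exact abs_add_le _ _
    have h4 := hamod (i₁ + m + 2)
    have h5 := hamod (i₁ + m)
    linarith
  have hP1 : P.1 = ((a 0 : ℤ) : ℚ) := ha 0
  have hP2 : P.2 = ((a 1 : ℤ) : ℚ) := by
    have : P.2 = x 1 := rfl
    rw [this, ha 1]
  constructor
  · exact ⟨a 0, a 1, by rw [← hP1, ← hP2]⟩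
  · have hb0 : |a 0| ≤ (k : ℤ) + 3 := le_trans (hamod 0) hMle
    have hb1 : |a 1| ≤ (k : ℤ) + 3 := le_trans (hamod 1) hMle
    have hcast : ((2 * k + 1 : ℕ) : ℚ) + 5 = 2 * ((k : ℚ) + 3) := by push_cast; ring
    rw [hcast]
    have h1 : |P.1| ≤ (k : ℚ) + 3 := by
      rw [hP1]
      rw [← Int.cast_abs]
      exact_mod_cast hb0
    have h2 : |P.2| ≤ (k : ℚ) + 3 := by
      rw [hP2, ← Int.cast_abs]
      exact_mod_cast hb1
    rw [max_le_iff]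
    constructor <;> linarith
end

section
/- Every integer point (x,y) ∈ ℤ² is periodic under the transcendental Hénon map h_∞(x,y) = (y, −x + (2/√3)·sin(πy/3)), and its exact (minimal) period belongs to the set {1, 4, 5, 6, 12, 20}. Moreover, the only point of period 1 is (0,0); the points of period 6 are exactly (1,0), (1,1), (0,1), (−1,0), (−1,−1), (0,−1); and the points of period 5 are exactly (2,0), (2,1), (1,2), (0,2), (−1,1), (−2,0), (−2,−1), (−1,−2), (0,−2), (1,−1). -/
/-- The limiting (transcendental) Hénon map `h_∞(x,y) = (y, −x + (2/√3) sin(πy/3))`. -/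
noncomputable def henonInf (P : ℝ × ℝ) : ℝ × ℝ :=
  (P.2, -P.1 + 2 / Real.sqrt 3 * Real.sin (Real.pi * P.2 / 3))

/-- `P` is periodic for `h_∞` with exact (minimal) period `n`. -/
def ExactPeriod (n : ℕ) (P : ℝ × ℝ) : Prop :=
  1 ≤ n ∧ henonInf^[n] P = P ∧ ∀ m : ℕ, 1 ≤ m → m < n → henonInf^[m] P ≠ P

/-!
On integers `(2/√3) sin(πy/3)` takes the `6`-periodic values `0, 1, 1, 0, -1, -1`, so `h_∞`
restricts to an integer map `H`. Translating a point by `6v` translates its image by `6 J v`,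
where `J` is the quarter-turn `(a, b) ↦ (b, -a)`; hence `H^n (r + 6v) = H^n r + 6 J^n v`.
Since `J⁴ = 1`, periodicity with period divisible by `4` only depends on the residue mod `6`,
and checking the `36` residues shows that every point is fixed by `H¹²` or `H²⁰`. Since `J^n = -1`
for `n ≡ 2 mod 4`, a fixed point `p = r + 6v` of `H^n` satisfies `2p = r + H^n r`; this confines
the points whose period divides `6` or `10` to the box `[-2, 2]²`, where they are listed directly.
-/

open Function Real

theorem Function.Semiconj.minimalPeriod_eq {α β : Type*} {fa : α → α} {fb : β → β} {g : α → β}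
    (h : Semiconj g fa fb) (hg : Injective g) (x : α) :
    minimalPeriod fb (g x) = minimalPeriod fa x :=
  minimalPeriod_eq_minimalPeriod_iff.2 fun n =>
    ⟨fun hx => hg <| (h.iterate_right n x).trans hx, fun hx => hx.map h⟩

theorem minimalPeriod_eq_iff_of_pos {α : Type*} {f : α → α} {x : α} {n : ℕ} (hn : 0 < n) :
    minimalPeriod f x = n ↔ IsPeriodicPt f n x ∧ ∀ m < n, 0 < m → ¬IsPeriodicPt f m x := by
  constructor
  · rintro rfl
    exact ⟨isPeriodicPt_minimalPeriod f x,
      fun m hm hm0 => not_isPeriodicPt_of_pos_of_lt_minimalPeriod hm0.ne' hm⟩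
  · rintro ⟨hx, hmin⟩
    refine (hx.minimalPeriod_le hn).antisymm (not_lt.1 fun hlt => ?_)
    exact hmin _ hlt (hx.minimalPeriod_pos hn) (isPeriodicPt_minimalPeriod f x)

theorem exactPeriod_iff {n : ℕ} {P : ℝ × ℝ} :
    ExactPeriod n P ↔ 0 < n ∧ minimalPeriod henonInf P = n := by
  constructor
  · rintro ⟨hn, hP, hmin⟩
    exact ⟨hn, (minimalPeriod_eq_iff_of_pos hn).2 ⟨hP, fun m hm hm0 => hmin m hm0 hm⟩⟩
  · rintro ⟨hn, h⟩
    obtain ⟨hP, hmin⟩ := (minimalPeriod_eq_iff_of_pos hn).1 h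
    exact ⟨hn, hP, fun m hm0 hm => hmin m hm hm0⟩

def sinZ (y : ℤ) : ℤ :=
  if y % 6 = 1 ∨ y % 6 = 2 then 1 else if y % 6 = 4 ∨ y % 6 = 5 then -1 else 0

theorem sinZ_add_six_mul (y k : ℤ) : sinZ (y + 6 * k) = sinZ y := by
  simp [sinZ]

theorem cast_sinZ (y : ℤ) : (sinZ y : ℝ) = 2 / √3 * sin (π * y / 3) := by
  have h3 : 2 / √3 * (√3 / 2) = 1 := by field_simp
  obtain ⟨j, k, rfl, hj0, hj6⟩ : ∃ j k : ℤ, y = j + 6 * k ∧ 0 ≤ j ∧ j < 6 :=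
    ⟨y % 6, y / 6, by omega, by omega, by omega⟩
  rw [sinZ_add_six_mul, show π * ↑(j + 6 * k) / 3 = π * j / 3 + k * (2 * π) by push_cast; ring,
    sin_add_int_mul_two_pi]
  interval_cases j
  · simp [sinZ]
  · simp [sinZ, h3]
  · rw [show π * ((2 : ℤ) : ℝ) / 3 = π - π / 3 by push_cast; ring, sin_pi_sub]
    simp [sinZ, h3]
  · simp [sinZ]
  · rw [show π * ((4 : ℤ) : ℝ) / 3 = π / 3 + π by push_cast; ring, sin_add_pi]
    simp [sinZ, h3]
  · rw [show π * ((5 : ℤ) : ℝ) / 3 = -(π / 3) + (1 : ℤ) * (2 * π) by push_cast; ring,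
      sin_add_int_mul_two_pi, sin_neg]
    simp [sinZ, h3]

def henonZ (p : ℤ × ℤ) : ℤ × ℤ := (p.2, -p.1 + sinZ p.2)

theorem semiconj_intCast_henonZ :
    Semiconj (Prod.map ((↑) : ℤ → ℝ) ((↑) : ℤ → ℝ)) henonZ henonInf := by
  rintro ⟨x, y⟩
  simp [henonZ, henonInf, cast_sinZ]

def rotZ (v : ℤ × ℤ) : ℤ × ℤ := (v.2, -v.1)

theorem rotZ_iterate_four : rotZ^[4] = id :=
  funext fun v => by simp [rotZ]

theorem rotZ_iterate_four_mul (k : ℕ) : rotZ^[4 * k] = id := by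
  rw [iterate_mul, rotZ_iterate_four, iterate_id]

theorem rotZ_iterate_four_mul_add_two (k : ℕ) (v : ℤ × ℤ) : rotZ^[4 * k + 2] v = -v := by
  rw [iterate_add_apply, rotZ_iterate_four_mul]
  rfl

theorem henonZ_add_six_smul (p v : ℤ × ℤ) :
    henonZ (p + (6 : ℤ) • v) = henonZ p + (6 : ℤ) • rotZ v := by
  simp only [henonZ, rotZ, Prod.fst_add, Prod.snd_add, Prod.smul_fst, Prod.smul_snd, smul_eq_mul,
    sinZ_add_six_mul, Prod.mk_add_mk, Prod.smul_mk]
  congr 1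
  ring

theorem iterate_henonZ_add_six_smul (n : ℕ) (p v : ℤ × ℤ) :
    henonZ^[n] (p + (6 : ℤ) • v) = henonZ^[n] p + (6 : ℤ) • rotZ^[n] v := by
  induction n with
  | zero => rfl
  | succ n ih => simp only [iterate_succ_apply', ih, henonZ_add_six_smul]

theorem exists_eq_add_six_smul (p : ℤ × ℤ) :
    ∃ r ∈ Finset.Ico 0 6 ×ˢ Finset.Ico 0 6, ∃ v : ℤ × ℤ, p = r + (6 : ℤ) • v :=
  ⟨(p.1 % 6, p.2 % 6), by simp only [Finset.mem_product, Finset.mem_Ico]; omega,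
    (p.1 / 6, p.2 / 6), by
      ext <;> simp only [Prod.fst_add, Prod.snd_add, Prod.smul_mk, smul_eq_mul] <;> omega⟩

theorem isPeriodicPt_henonZ_add_six_smul_iff (k : ℕ) (r v : ℤ × ℤ) :
    IsPeriodicPt henonZ (4 * k) (r + (6 : ℤ) • v) ↔ IsPeriodicPt henonZ (4 * k) r := by
  simp only [IsPeriodicPt, IsFixedPt, iterate_henonZ_add_six_smul, rotZ_iterate_four_mul, id,
    add_left_inj]

theorem two_smul_eq_of_isPeriodicPt_henonZ {k : ℕ} {r v : ℤ × ℤ}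
    (h : IsPeriodicPt henonZ (4 * k + 2) (r + (6 : ℤ) • v)) :
    (2 : ℤ) • (r + (6 : ℤ) • v) = r + henonZ^[4 * k + 2] r := by
  rw [IsPeriodicPt, IsFixedPt, iterate_henonZ_add_six_smul, rotZ_iterate_four_mul_add_two] at h
  rw [two_smul]
  nth_rw 1 [← h]
  abel

theorem isPeriodicPt_henonZ_twelve_or_twenty (p : ℤ × ℤ) :
    IsPeriodicPt henonZ 12 p ∨ IsPeriodicPt henonZ 20 p := by
  obtain ⟨r, hr, v, rfl⟩ := exists_eq_add_six_smul p
  rw [isPeriodicPt_henonZ_add_six_smul_iff 3, isPeriodicPt_henonZ_add_six_smul_iff 5]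
  revert r
  decide

theorem mem_box_of_isPeriodicPt_henonZ {p : ℤ × ℤ}
    (h : IsPeriodicPt henonZ 6 p ∨ IsPeriodicPt henonZ 10 p) :
    p ∈ Finset.Icc (-2) 2 ×ˢ Finset.Icc (-2) 2 := by
  have hbound : ∀ r ∈ Finset.Ico (0 : ℤ) 6 ×ˢ Finset.Ico (0 : ℤ) 6,
      r + henonZ^[6] r ∈ Finset.Icc (-4) 4 ×ˢ Finset.Icc (-4) 4 ∧
      r + henonZ^[10] r ∈ Finset.Icc (-4) 4 ×ˢ Finset.Icc (-4) 4 := by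
    decide
  obtain ⟨r, hr, v, rfl⟩ := exists_eq_add_six_smul p
  have h2p : (2 : ℤ) • (r + (6 : ℤ) • v) ∈ Finset.Icc (-4) 4 ×ˢ Finset.Icc (-4) 4 := by
    rcases h with h | h
    · rw [two_smul_eq_of_isPeriodicPt_henonZ (k := 1) h]
      exact (hbound r hr).1
    · rw [two_smul_eq_of_isPeriodicPt_henonZ (k := 2) h]
      exact (hbound r hr).2
  simp only [Finset.mem_product, Finset.mem_Icc, Prod.smul_fst, Prod.smul_snd, Prod.fst_add,
    Prod.snd_add, smul_eq_mul] at h2p ⊢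
  omega

def periodFivePts : Finset (ℤ × ℤ) :=
  {(2, 0), (2, 1), (1, 2), (0, 2), (-1, 1), (-2, 0), (-2, -1), (-1, -2), (0, -2), (1, -1)}

def periodSixPts : Finset (ℤ × ℤ) := {(1, 0), (1, 1), (0, 1), (-1, 0), (-1, -1), (0, -1)}

theorem minimalPeriod_henonZ_of_mem_periodFivePts {p : ℤ × ℤ} (hp : p ∈ periodFivePts) :
    minimalPeriod henonZ p = 5 := by
  rw [minimalPeriod_eq_iff_of_pos (by norm_num)]
  revert p
  decide

theorem minimalPeriod_henonZ_of_mem_periodSixPts {p : ℤ × ℤ} (hp : p ∈ periodSixPts) :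
    minimalPeriod henonZ p = 6 := by
  rw [minimalPeriod_eq_iff_of_pos (by norm_num)]
  revert p
  decide

theorem eq_zero_or_mem_of_isPeriodicPt_henonZ {p : ℤ × ℤ}
    (h : IsPeriodicPt henonZ 6 p ∨ IsPeriodicPt henonZ 10 p) :
    p = 0 ∨ p ∈ periodFivePts ∨ p ∈ periodSixPts := by
  have hbox : ∀ q ∈ Finset.Icc (-2 : ℤ) 2 ×ˢ Finset.Icc (-2 : ℤ) 2,
      IsPeriodicPt henonZ 6 q ∨ IsPeriodicPt henonZ 10 q →
        q = 0 ∨ q ∈ periodFivePts ∨ q ∈ periodSixPts := by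
    decide
  exact hbox p (mem_box_of_isPeriodicPt_henonZ h) h

theorem minimalPeriod_henonZ_of_dvd {p : ℤ × ℤ}
    (h : minimalPeriod henonZ p ∣ 6 ∨ minimalPeriod henonZ p ∣ 10) :
    (p = 0 ∧ minimalPeriod henonZ p = 1) ∨ (p ∈ periodFivePts ∧ minimalPeriod henonZ p = 5) ∨
      (p ∈ periodSixPts ∧ minimalPeriod henonZ p = 6) := by
  simp only [← isPeriodicPt_iff_minimalPeriod_dvd] at h
  rcases eq_zero_or_mem_of_isPeriodicPt_henonZ h with rfl | hp | hp
  · exact Or.inl ⟨rfl, minimalPeriod_eq_one_iff_isFixedPt.2 rfl⟩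
  · exact Or.inr <| Or.inl ⟨hp, minimalPeriod_henonZ_of_mem_periodFivePts hp⟩
  · exact Or.inr <| Or.inr ⟨hp, minimalPeriod_henonZ_of_mem_periodSixPts hp⟩

theorem minimalPeriod_henonZ_mem (p : ℤ × ℤ) :
    minimalPeriod henonZ p ∈ ({1, 4, 5, 6, 12, 20} : Set ℕ) := by
  by_cases hsmall : minimalPeriod henonZ p ∣ 6 ∨ minimalPeriod henonZ p ∣ 10
  · rcases minimalPeriod_henonZ_of_dvd hsmall with ⟨-, h⟩ | ⟨-, h⟩ | ⟨-, h⟩ <;> simp [h]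
  have hdvd : minimalPeriod henonZ p ∈ Nat.divisors 12 ∪ Nat.divisors 20 := by
    simpa [Nat.mem_divisors, ← isPeriodicPt_iff_minimalPeriod_dvd] using
      isPeriodicPt_henonZ_twelve_or_twenty p
  have hlarge : ∀ m ∈ Nat.divisors 12 ∪ Nat.divisors 20, ¬(m ∣ 6 ∨ m ∣ 10) →
      m = 4 ∨ m = 12 ∨ m = 20 := by
    decide
  rcases hlarge _ hdvd hsmall with h | h | h <;> simp [h]

theorem minimalPeriod_henonZ_pos (p : ℤ × ℤ) : 0 < minimalPeriod henonZ p := by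
  rcases isPeriodicPt_henonZ_twelve_or_twenty p with h | h <;>
    exact h.minimalPeriod_pos (by norm_num)

theorem minimalPeriod_henonZ_eq_one_iff {p : ℤ × ℤ} : minimalPeriod henonZ p = 1 ↔ p = 0 := by
  refine ⟨fun h => ?_, fun h => h ▸ minimalPeriod_eq_one_iff_isFixedPt.2 rfl⟩
  rcases minimalPeriod_henonZ_of_dvd (p := p) (by simp [h]) with ⟨hp, -⟩ | ⟨-, h'⟩ | ⟨-, h'⟩
  · exact hp
  · omega
  · omega

theorem minimalPeriod_henonZ_eq_five_iff {p : ℤ × ℤ} :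
    minimalPeriod henonZ p = 5 ↔ p ∈ periodFivePts := by
  refine ⟨fun h => ?_, minimalPeriod_henonZ_of_mem_periodFivePts⟩
  rcases minimalPeriod_henonZ_of_dvd (p := p) (by simp [h]) with ⟨-, h'⟩ | ⟨hp, -⟩ | ⟨-, h'⟩
  · omega
  · exact hp
  · omega

theorem minimalPeriod_henonZ_eq_six_iff {p : ℤ × ℤ} :
    minimalPeriod henonZ p = 6 ↔ p ∈ periodSixPts := by
  refine ⟨fun h => ?_, minimalPeriod_henonZ_of_mem_periodSixPts⟩
  rcases minimalPeriod_henonZ_of_dvd (p := p) (by simp [h]) with ⟨-, h'⟩ | ⟨-, h'⟩ | ⟨hp, -⟩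
  · omega
  · omega
  · exact hp

/-- Every integer point is periodic under `h_∞` with exact period in `{1,4,5,6,12,20}`;
the unique period-1 point is `(0,0)`, the period-6 points are exactly the six listed
ones, and the period-5 points are exactly the ten listed ones. -/
theorem henonInf_integer_periods :
    (∀ x y : ℤ, ∃ n ∈ ({1, 4, 5, 6, 12, 20} : Set ℕ), ExactPeriod n ((x : ℝ), (y : ℝ))) ∧
    (∀ x y : ℤ, ExactPeriod 1 ((x : ℝ), (y : ℝ)) ↔ (x, y) = ((0 : ℤ), (0 : ℤ))) ∧
    (∀ x y : ℤ, ExactPeriod 6 ((x : ℝ), (y : ℝ)) ↔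
      (x, y) ∈ ({(1, 0), (1, 1), (0, 1), (-1, 0), (-1, -1), (0, -1)} : Set (ℤ × ℤ))) ∧
    (∀ x y : ℤ, ExactPeriod 5 ((x : ℝ), (y : ℝ)) ↔
      (x, y) ∈ ({(2, 0), (2, 1), (1, 2), (0, 2), (-1, 1),
        (-2, 0), (-2, -1), (-1, -2), (0, -2), (1, -1)} : Set (ℤ × ℤ))) := by
  have key (n : ℕ) (x y : ℤ) :
      ExactPeriod n ((x : ℝ), (y : ℝ)) ↔ 0 < n ∧ minimalPeriod henonZ (x, y) = n := by
    rw [exactPeriod_iff, ← semiconj_intCast_henonZ.minimalPeriod_eq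
      (Int.cast_injective.prodMap Int.cast_injective)]
    rfl
  refine ⟨fun x y => ⟨_, minimalPeriod_henonZ_mem (x, y),
    (key _ x y).2 ⟨minimalPeriod_henonZ_pos _, rfl⟩⟩, fun x y => ?_, fun x y => ?_, fun x y => ?_⟩
  · rw [key, minimalPeriod_henonZ_eq_one_iff]
    simp
  · rw [key, minimalPeriod_henonZ_eq_six_iff]
    simp [periodSixPts]
  · rw [key, minimalPeriod_henonZ_eq_five_iff]
    simp [periodFivePts]
end
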